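/- arXiv:1202.4654 — 4 statements merged into one kernel-verified Lean document; each statement's English description precedes it below -/
import Mathlib

section
/- Let p>1, let N≥1 be an integer, and let h∈C([0,1],ℝ). Then u:=S_p(h) is the unique function satisfying: u∈C^1([0,1],ℝ), φ_p∘u'∈C^1([0,1],ℝ), −(d/dr)(r^{N−1}φ_p(u'(r))) = r^{N−1} h(r) for 0<r<1, and u'(0)=u(1)=0. -/
open Set MeasureTheory Filter Topology intervalIntegral

noncomputable section

/-- `phi p ξ = |ξ|^(p-2) ξ`, the function `φ_p`. -/
def phi (p ξ : ℝ) : ℝ := |ξ| ^ (p - 2) * ξ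


lemma phi_zero (q : ℝ) : phi q 0 = 0 := by simp [phi]

lemma phi_neg (q x : ℝ) : phi q (-x) = -phi q x := by simp [phi]

lemma abs_phi (q x : ℝ) (hx : x ≠ 0) : |phi q x| = |x| ^ (q - 1) := by
  have h0 : |x| ≠ 0 := abs_ne_zero.2 hx
  rw [phi, abs_mul, abs_of_nonneg (Real.rpow_nonneg (abs_nonneg x) _)]
  rw [show q - 1 = q - 2 + 1 by ring, Real.rpow_add_one h0]

lemma one_lt_conj {p : ℝ} (hp : 1 < p) : 1 < p / (p - 1) := by
  rw [lt_div_iff₀ (by linarith)]; linarith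

lemma conj_conj {p : ℝ} (hp : 1 < p) : (p / (p - 1)) / (p / (p - 1) - 1) = p := by
  have h1 : p - 1 ≠ 0 := by linarith
  have h2 : p / (p - 1) - 1 = 1 / (p - 1) := by field_simp; ring
  rw [h2, div_div_div_cancel_right₀]
  · simp
  all_goals simp [h1]

lemma phi_phi {p : ℝ} (hp : 1 < p) (x : ℝ) : phi p (phi (p / (p - 1)) x) = x := by
  rcases eq_or_ne x 0 with rfl | hx
  · simp [phi]
  set q := p / (p - 1) with hq
  have h0 : |x| ≠ 0 := abs_ne_zero.2 hx
  have h0' : (0:ℝ) < |x| := abs_pos.2 hx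
  have key : (q - 1) * (p - 2) + (q - 2) = 0 := by
    have h1 : p - 1 ≠ 0 := by linarith
    rw [hq]; field_simp; ring
  rw [phi, abs_phi q x hx]
  show (|x| ^ (q-1)) ^ (p - 2) * (|x| ^ (q - 2) * x) = x
  rw [← Real.rpow_mul (abs_nonneg x), ← mul_assoc, ← Real.rpow_add h0', key,
    Real.rpow_zero, one_mul]

lemma phi_phi' {p : ℝ} (hp : 1 < p) (x : ℝ) : phi (p / (p - 1)) (phi p x) = x := by
  have := phi_phi (one_lt_conj hp) x
  rwa [conj_conj hp] at this

lemma continuous_phi {q : ℝ} (hq : 1 < q) : Continuous (phi q) := by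
  rw [continuous_iff_continuousAt]
  intro x
  rcases eq_or_ne x 0 with rfl | hx
  · rw [ContinuousAt, phi_zero]
    have hb : ∀ y : ℝ, ‖phi q y‖ ≤ |y| ^ (q - 1) := by
      intro y
      rcases eq_or_ne y 0 with rfl | hy
      · simp [phi_zero, Real.rpow_nonneg]
      · rw [Real.norm_eq_abs, abs_phi q y hy]
    have ht : Tendsto (fun y : ℝ => |y| ^ (q - 1)) (𝓝 0) (𝓝 0) := by
      have : ContinuousAt (fun t : ℝ => t ^ (q - 1)) 0 :=
        Real.continuousAt_rpow_const 0 _ (Or.inr (by linarith))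
      have habs : ContinuousAt (fun y : ℝ => |y|) (0:ℝ) := continuous_abs.continuousAt
      have h2 := ContinuousAt.comp (by simpa using this) habs
      simpa [ContinuousAt, Function.comp_def, Real.zero_rpow (by linarith : q - 1 ≠ 0)] using h2
    exact squeeze_zero_norm hb ht
  · exact (ContinuousAt.mul
      ((Real.continuousAt_rpow_const |x| _ (Or.inl (abs_ne_zero.2 hx))).comp
        continuous_abs.continuousAt) continuousAt_id)


variable {H : ℝ → ℝ} {m : ℕ}

/-- `Ic H m s = ∫_0^s t^m H t dt`. -/
def Ic (H : ℝ → ℝ) (m : ℕ) (s : ℝ) : ℝ := ∫ t in (0:ℝ)..s, t ^ m * H t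

lemma cont_integrand (hH : Continuous H) : Continuous (fun t : ℝ => t ^ m * H t) :=
  (continuous_pow m).mul hH

lemma hasDerivAt_Ic (hH : Continuous H) (s : ℝ) :
    HasDerivAt (Ic H m) (s ^ m * H s) s :=
  intervalIntegral.integral_hasDerivAt_right
    ((cont_integrand hH).intervalIntegrable _ _)
    ((cont_integrand hH).stronglyMeasurableAtFilter _ _)
    (cont_integrand hH).continuousAt

lemma continuous_Ic (hH : Continuous H) : Continuous (Ic H m) := by
  rw [continuous_iff_continuousAt]
  exact fun s => (hasDerivAt_Ic hH s).continuousAt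

lemma Ic_zero : Ic H m 0 = 0 := intervalIntegral.integral_same

/-- `Jc H m s = Ic H m s / s^m`, which equals `Jmap` when `H` is suitable. -/
def Jc (H : ℝ → ℝ) (m : ℕ) (s : ℝ) : ℝ := Ic H m s / s ^ m

lemma Jc_zero : Jc H m 0 = 0 := by simp [Jc, Ic_zero]

/-- the key limit: `Ic s / s^(m+1) → H 0 / (m+1)` as `s → 0`. -/
lemma tendsto_Ic_div (hH : Continuous H) :
    Tendsto (fun s => Ic H m s / s ^ (m+1)) (𝓝[≠] (0:ℝ)) (𝓝 (H 0 / (m+1))) := by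
  rw [Metric.tendsto_nhdsWithin_nhds]
  intro ε hε
  obtain ⟨δ, hδ, hδ'⟩ := Metric.continuousAt_iff.1 hH.continuousAt (ε / 2)
    (by positivity)
  refine ⟨δ, hδ, fun {s} hs hsd => ?_⟩
  have hs0 : s ≠ 0 := hs
  have hIs : Ic H m s - H 0 * s^(m+1) / (m+1) = ∫ t in (0:ℝ)..s, t ^ m * (H t - H 0) := by
    have h1 : ∫ t in (0:ℝ)..s, t ^ m * (H t - H 0)
        = (∫ t in (0:ℝ)..s, t ^ m * H t) - ∫ t in (0:ℝ)..s, t ^ m * H 0 := by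
      rw [← intervalIntegral.integral_sub (f := fun t => t ^ m * H t) (g := fun t => t ^ m * H 0)
        (((continuous_pow m).mul hH).intervalIntegrable _ _)
        (((continuous_pow m).mul continuous_const).intervalIntegrable _ _)]
      congr 1; ext t; ring
    have h2 : (∫ t in (0:ℝ)..s, t ^ m * H 0) = H 0 * s^(m+1)/(m+1) := by
      rw [intervalIntegral.integral_mul_const, integral_pow]
      push_cast; ring
    rw [h1, h2]; rfl
  have hb : |Ic H m s - H 0 * s^(m+1)/(m+1)| ≤ (ε/2) * |s|^(m+1) := by
    rw [hIs]
    have := intervalIntegral.norm_integral_le_of_norm_le_const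
      (C := ε/2 * |s|^m) (f := fun t => t ^ m * (H t - H 0)) (a := (0:ℝ)) (b := s) ?_
    · rw [Real.norm_eq_abs] at this
      calc |∫ t in (0:ℝ)..s, t ^ m * (H t - H 0)| ≤ ε/2 * |s|^m * |s - 0| := this
        _ = (ε/2) * |s|^(m+1) := by rw [sub_zero, pow_succ]; ring
    · intro x hx
      have hxs : |x| ≤ |s| := by
        rcases Set.mem_uIoc.1 hx with h | h
        · rw [abs_of_pos h.1, abs_of_nonneg (le_of_lt (lt_of_lt_of_le h.1 h.2))]
          exact h.2
        · rw [abs_of_nonpos h.2, abs_of_nonpos (le_of_lt (lt_of_lt_of_le h.1 h.2))]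
          linarith [h.1]
      have hxd : dist x 0 < δ := by
        rw [Real.dist_eq, sub_zero]
        calc |x| ≤ |s| := hxs
          _ = dist s 0 := by rw [Real.dist_eq, sub_zero]
          _ < δ := hsd
      have := le_of_lt (hδ' hxd)
      rw [Real.dist_eq] at this
      calc ‖x ^ m * (H x - H 0)‖ = |x|^m * |H x - H 0| := by
            rw [Real.norm_eq_abs, abs_mul, abs_pow]
        _ ≤ |s|^m * (ε/2) := by
            apply mul_le_mul (pow_le_pow_left₀ (abs_nonneg x) hxs m) this (abs_nonneg _)
            positivity
        _ = ε/2 * |s|^m := by ring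
  rw [Real.dist_eq]
  have hsp : (0:ℝ) < |s|^(m+1) := pow_pos (abs_pos.2 hs0) _
  have : Ic H m s / s^(m+1) - H 0/(m+1) = (Ic H m s - H 0 * s^(m+1)/(m+1)) / s^(m+1) := by
    field_simp
  rw [this, abs_div, abs_pow]
  rw [div_lt_iff₀ hsp]
  calc |Ic H m s - H 0 * s^(m+1)/(m+1)| ≤ (ε/2) * |s|^(m+1) := hb
    _ < ε * |s|^(m+1) := by
        apply mul_lt_mul_of_pos_right _ hsp
        linarith

lemma continuousAt_Jc_ne (hH : Continuous H) {s : ℝ} (hs : s ≠ 0) :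
    ContinuousAt (Jc H m) s :=
  ((continuous_Ic hH).continuousAt).div (continuous_pow m).continuousAt (pow_ne_zero m hs)

lemma continuousAt_Jc_zero (hH : Continuous H) : ContinuousAt (Jc H m) 0 := by
  rw [← continuousWithinAt_compl_self]
  have key := tendsto_Ic_div (H := H) (m := m) hH
  rw [ContinuousWithinAt, Jc_zero]
  have h2 : Tendsto (fun s : ℝ => (Ic H m s / s ^ (m+1)) * s) (𝓝[≠] (0:ℝ)) (𝓝 (H 0 / (m+1) * 0)) :=
    key.mul (tendsto_nhdsWithin_of_tendsto_nhds tendsto_id)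
  rw [mul_zero] at h2
  apply h2.congr'
  filter_upwards [self_mem_nhdsWithin] with s hs
  have hs0 : s ≠ 0 := hs
  rw [Jc, pow_succ, div_mul_eq_mul_div, mul_div_mul_right _ _ hs0]

lemma continuous_Jc (hH : Continuous H) : Continuous (Jc H m) := by
  rw [continuous_iff_continuousAt]
  intro s
  rcases eq_or_ne s 0 with rfl | hs
  · exact continuousAt_Jc_zero hH
  · exact continuousAt_Jc_ne hH hs

/-- The derivative of `Jc`. -/
def Dc (H : ℝ → ℝ) (m : ℕ) (s : ℝ) : ℝ :=
  if s = 0 then H 0 / (m+1) else H s - m * (Ic H m s / s ^ (m+1))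

lemma hasDerivAt_Jc_ne (hH : Continuous H) {s : ℝ} (hs : s ≠ 0) :
    HasDerivAt (Jc H m) (Dc H m s) s := by
  have hpow : HasDerivAt (fun s : ℝ => s ^ m) ((m : ℝ) * s ^ (m-1)) s := by
    simpa using hasDerivAt_pow m s
  have hd := (hasDerivAt_Ic (m := m) hH s).div hpow (pow_ne_zero m hs)
  convert (show HasDerivAt (Jc H m) _ s from hd) using 1
  rw [Dc, if_neg hs]
  rcases Nat.eq_zero_or_pos m with rfl | hm
  · simp
  · obtain ⟨k, rfl⟩ : ∃ k, m = k + 1 := ⟨m - 1, (Nat.succ_pred_eq_of_pos hm).symm⟩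
    have h1 : (k:ℝ) + 1 ≠ 0 := by positivity
    simp only [Nat.add_sub_cancel]
    field_simp
    ring

lemma hasDerivAt_Jc_zero (hH : Continuous H) : HasDerivAt (Jc H m) (Dc H m 0) 0 := by
  rw [hasDerivAt_iff_tendsto_slope]
  have key := tendsto_Ic_div (H := H) (m := m) hH
  rw [Dc, if_pos rfl]
  apply key.congr'
  filter_upwards [self_mem_nhdsWithin] with s hs
  have hs0 : s ≠ 0 := hs
  rw [slope_def_field, Jc_zero, Jc]
  field_simp [pow_succ]
  ring

lemma hasDerivAt_Jc (hH : Continuous H) (s : ℝ) : HasDerivAt (Jc H m) (Dc H m s) s := by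
  rcases eq_or_ne s 0 with rfl | hs
  · exact hasDerivAt_Jc_zero hH
  · exact hasDerivAt_Jc_ne hH hs

lemma continuous_Dc (hH : Continuous H) : Continuous (Dc H m) := by
  rw [continuous_iff_continuousAt]
  intro s
  rcases eq_or_ne s 0 with rfl | hs
  · rw [← continuousWithinAt_compl_self, ContinuousWithinAt, Dc, if_pos rfl]
    have h1 : Tendsto (fun s => H s - m * (Ic H m s / s ^ (m+1))) (𝓝[≠] (0:ℝ))
        (𝓝 (H 0 - m * (H 0 / (m+1)))) := by
      apply Tendsto.sub
      · exact tendsto_nhdsWithin_of_tendsto_nhds hH.continuousAt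
      · exact (tendsto_const_nhds.mul (tendsto_Ic_div hH))
    have h2 : H 0 - m * (H 0 / (m+1)) = H 0 / (m+1) := by
      have : (m:ℝ) + 1 ≠ 0 := by positivity
      field_simp; ring
    rw [h2] at h1
    apply h1.congr'
    filter_upwards [self_mem_nhdsWithin] with x hx
    rw [Dc, if_neg (show x ≠ 0 from hx)]
  · have h1 : ContinuousAt (fun s => H s - m * (Ic H m s / s ^ (m+1))) s := by
      apply ContinuousAt.sub hH.continuousAt
      exact continuousAt_const.mul
        (((continuous_Ic hH).continuousAt).div (continuous_pow (m+1)).continuousAt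
          (pow_ne_zero _ hs))
    apply h1.congr
    filter_upwards [isOpen_compl_singleton.mem_nhds hs] with x hx
    rw [Dc, if_neg (show x ≠ 0 from hx)]


/-- The (one-sided at endpoints) derivative of a function on `[0,1]`. -/
def deriv01 (u : ℝ → ℝ) (r : ℝ) : ℝ := derivWithin u (Set.Icc 0 1) r

/-- `u ∈ C^1([0,1],ℝ)`. -/
def C1on01 (u : ℝ → ℝ) : Prop :=
  (∀ r ∈ Set.Icc (0:ℝ) 1, DifferentiableWithinAt ℝ u (Set.Icc 0 1) r) ∧
  ContinuousOn (deriv01 u) (Set.Icc 0 1)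

/-- `J(h)(s) = ∫_0^s (t/s)^(N-1) h(t) dt`, with `J(h)(0) = 0`. -/
def Jmap (N : ℕ) (h : ℝ → ℝ) (s : ℝ) : ℝ :=
  if s = 0 then 0 else ∫ t in (0:ℝ)..s, (t / s) ^ (N - 1) * h t

/-- `S_p(h)(r) = ∫_r^1 φ_{p'}(J(h)(s)) ds` where `p' = p/(p-1)`. -/
def Sp (p : ℝ) (N : ℕ) (h : ℝ → ℝ) (r : ℝ) : ℝ :=
  ∫ s in r..(1:ℝ), phi (p / (p - 1)) (Jmap N h s)

/-- The sup norm over `[0,1]`. -/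
def norm0 (h : ℝ → ℝ) : ℝ := sSup ((fun t => |h t|) '' Set.Icc 0 1)

/-- `u` is not identically zero on `[0,1]`. -/
def Nontriv01 (u : ℝ → ℝ) : Prop := ∃ r ∈ Set.Icc (0:ℝ) 1, u r ≠ 0

/-- `(lam, u)` is a solution of problem (P):
`-(r^(N-1) φ_p(u'))' = lam r^(N-1) f(r, u(r))` on `(0,1)`, `u'(0) = u(1) = 0`. -/
def IsSolutionP (p : ℝ) (N : ℕ) (f : ℝ → ℝ → ℝ) (lam : ℝ) (u : ℝ → ℝ) : Prop :=
  C1on01 u ∧ C1on01 (fun r => phi p (deriv01 u r)) ∧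
  (∀ r ∈ Set.Ioo (0:ℝ) 1,
      HasDerivAt (fun s => s ^ (N - 1) * phi p (deriv01 u s))
        (-(lam * r ^ (N - 1) * f r (u r))) r) ∧
  deriv01 u 0 = 0 ∧ u 1 = 0

/-- `(lam, v)` is a principal eigenpair for the weight `w`. -/
def IsPrincipalEigenpair (p : ℝ) (N : ℕ) (w : ℝ → ℝ) (lam : ℝ) (v : ℝ → ℝ) : Prop :=
  0 < lam ∧ C1on01 v ∧ C1on01 (fun r => phi p (deriv01 v r)) ∧
  (∀ r ∈ Set.Ico (0:ℝ) 1, 0 < v r) ∧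
  (∀ r ∈ Set.Ioo (0:ℝ) 1,
      HasDerivAt (fun s => s ^ (N - 1) * phi p (deriv01 v s))
        (-(lam * r ^ (N - 1) * w r * phi p (v r))) r) ∧
  deriv01 v 0 = 0 ∧ v 1 = 0

/-- `S_p(h)` is the unique solution of the boundary value problem
`-(r^(N-1) φ_p(u'))' = r^(N-1) h(r)`, `u'(0) = u(1) = 0`. -/
theorem stmt_1 (p : ℝ) (hp : 1 < p) (N : ℕ) (hN : 1 ≤ N)
    (h : ℝ → ℝ) (hcont : ContinuousOn h (Set.Icc 0 1)) :
    (C1on01 (Sp p N h) ∧ C1on01 (fun r => phi p (deriv01 (Sp p N h) r)) ∧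
      (∀ r ∈ Set.Ioo (0:ℝ) 1,
        HasDerivAt (fun s => s ^ (N - 1) * phi p (deriv01 (Sp p N h) s))
          (-(r ^ (N - 1) * h r)) r) ∧
      deriv01 (Sp p N h) 0 = 0 ∧ Sp p N h 1 = 0) ∧
    (∀ u : ℝ → ℝ,
      C1on01 u → C1on01 (fun r => phi p (deriv01 u r)) →
      (∀ r ∈ Set.Ioo (0:ℝ) 1,
        HasDerivAt (fun s => s ^ (N - 1) * phi p (deriv01 u s))
          (-(r ^ (N - 1) * h r)) r) →
      deriv01 u 0 = 0 → u 1 = 0 →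
      Set.EqOn u (Sp p N h) (Set.Icc 0 1)) := by
  obtain ⟨m, rfl⟩ : ∃ m, N = m + 1 := ⟨N - 1, (Nat.succ_pred_eq_of_pos hN).symm⟩
  simp only [Nat.add_sub_cancel]
  have hq : 1 < p / (p - 1) := one_lt_conj hp
  set q : ℝ := p / (p - 1) with hqdef
  -- continuous extension of h to ℝ
  set H : ℝ → ℝ := fun t => h (max 0 (min 1 t)) with hHdef
  have hHc : Continuous H := hcont.comp_continuous
    (continuous_const.max (continuous_const.min continuous_id))
    (fun t => ⟨le_max_left _ _, max_le zero_le_one (min_le_left _ _)⟩)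
  have hHeq : ∀ t ∈ Icc (0:ℝ) 1, H t = h t := by
    intro t ht
    rw [hHdef]
    simp only
    rw [min_eq_right ht.2, max_eq_right ht.1]
  -- g = φ_q ∘ Jc
  set g : ℝ → ℝ := fun s => phi q (Jc H m s) with hgdef
  have hgc : Continuous g := (continuous_phi hq).comp (continuous_Jc hHc)
  have hg0 : g 0 = 0 := by rw [hgdef]; simp only [Jc_zero, phi_zero]
  -- Jmap = Jc on [0,1]
  have hJeq : ∀ s ∈ Icc (0:ℝ) 1, Jmap (m+1) h s = Jc H m s := by
    intro s hs
    rcases eq_or_ne s 0 with rfl | hs0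
    · rw [Jmap, if_pos rfl, Jc_zero]
    · rw [Jmap, if_neg hs0]
      simp only [Nat.add_sub_cancel]
      have h1 : EqOn (fun t => (t/s)^m * h t) (fun t => (s^m)⁻¹ * (t^m * H t)) (uIcc (0:ℝ) s) := by
        intro t ht
        rw [uIcc_of_le hs.1] at ht
        have ht' : t ∈ Icc (0:ℝ) 1 := ⟨ht.1, le_trans ht.2 hs.2⟩
        simp only
        rw [hHeq t ht', div_pow]
        field_simp
      rw [intervalIntegral.integral_congr h1, intervalIntegral.integral_const_mul]
      rw [Jc, Ic, inv_mul_eq_div]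
  -- Sp = ∫_r^1 g on [0,1]
  have hSpeq : ∀ r ∈ Icc (0:ℝ) 1, Sp p (m+1) h r = ∫ s in r..(1:ℝ), g s := by
    intro r hr
    rw [Sp]
    apply intervalIntegral.integral_congr
    intro s hs
    rw [uIcc_of_le hr.2] at hs
    have hs' : s ∈ Icc (0:ℝ) 1 := ⟨le_trans hr.1 hs.1, hs.2⟩
    simp only
    rw [hJeq s hs', ← hqdef]
  -- derivative of r ↦ ∫_r^1 g
  have hSpc : ∀ r : ℝ, HasDerivAt (fun r => ∫ s in r..(1:ℝ), g s) (-(g r)) r := by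
    intro r
    have h1 : HasDerivAt (fun r => ∫ s in (1:ℝ)..r, g s) (g r) r :=
      intervalIntegral.integral_hasDerivAt_right (hgc.intervalIntegrable _ _)
        (hgc.stronglyMeasurableAtFilter _ _) hgc.continuousAt
    have h2 := h1.neg
    have h3 : (fun r => ∫ s in r..(1:ℝ), g s) = fun r => -(∫ s in (1:ℝ)..r, g s) := by
      funext r
      rw [← intervalIntegral.integral_symm]
    rw [h3]
    exact h2
  have huniq : UniqueDiffOn ℝ (Icc (0:ℝ) 1) := uniqueDiffOn_Icc one_pos
  have hSpdw : ∀ r ∈ Icc (0:ℝ) 1,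
      HasDerivWithinAt (Sp p (m+1) h) (-(g r)) (Icc 0 1) r := by
    intro r hr
    exact ((hSpc r).hasDerivWithinAt).congr (fun x hx => hSpeq x hx) (hSpeq r hr)
  have hd01 : ∀ r ∈ Icc (0:ℝ) 1, deriv01 (Sp p (m+1) h) r = -(g r) := by
    intro r hr
    exact (hSpdw r hr).derivWithin (huniq r hr)
  -- φ_p ∘ deriv01 Sp = -(Jc) on [0,1]
  have hPeq : ∀ r ∈ Icc (0:ℝ) 1, phi p (deriv01 (Sp p (m+1) h) r) = -(Jc H m r) := by
    intro r hr
    rw [hd01 r hr, phi_neg, hgdef]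
    simp only
    rw [hqdef, phi_phi hp]
  constructor
  · refine ⟨⟨fun r hr => (hSpdw r hr).differentiableWithinAt,
      (hgc.neg.continuousOn).congr (fun r hr => hd01 r hr)⟩, ?_, ?_, ?_, ?_⟩
    · constructor
      · intro r hr
        exact (((hasDerivAt_Jc hHc r).neg.hasDerivWithinAt).differentiableWithinAt).congr
          (fun y hy => hPeq y hy) (hPeq r hr)
      · have hPd : ∀ r ∈ Icc (0:ℝ) 1,
            deriv01 (fun r => phi p (deriv01 (Sp p (m+1) h) r)) r = -(Dc H m r) := by
          intro r hr
          have e1 : deriv01 (fun r => phi p (deriv01 (Sp p (m+1) h) r)) r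
              = derivWithin (fun s => -(Jc H m s)) (Icc 0 1) r :=
            derivWithin_congr (fun y hy => hPeq y hy) (hPeq r hr)
          rw [e1]
          exact ((hasDerivAt_Jc hHc r).neg.hasDerivWithinAt).derivWithin (huniq r hr)
        exact ((continuous_Dc hHc).neg.continuousOn).congr hPd
    · intro r hr
      have hr' : r ∈ Icc (0:ℝ) 1 := ⟨hr.1.le, hr.2.le⟩
      have base : HasDerivAt (fun s => -(Ic H m s)) (-(r^m * H r)) r :=
        (hasDerivAt_Ic (m := m) hHc r).neg
      have hval : -(r^m * H r) = -(r^m * h r) := by rw [hHeq r hr']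
      rw [hval] at base
      apply base.congr_of_eventuallyEq
      filter_upwards [isOpen_Ioo.mem_nhds hr] with s hs
      have hs' : s ∈ Icc (0:ℝ) 1 := ⟨hs.1.le, hs.2.le⟩
      have hs0 : s ≠ 0 := ne_of_gt hs.1
      rw [hPeq s hs', Jc]
      rw [mul_neg, mul_div_cancel₀ _ (pow_ne_zero m hs0)]
    · rw [hd01 0 ⟨le_refl 0, zero_le_one⟩, hg0, neg_zero]
    · rw [hSpeq 1 ⟨zero_le_one, le_refl 1⟩, intervalIntegral.integral_same]
  · intro u hu1 hu2 hu3 hu4 hu5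
    have hucont : ContinuousOn u (Icc 0 1) := fun r hr => (hu1.1 r hr).continuousWithinAt
    have hphicont : ContinuousOn (fun r => phi p (deriv01 u r)) (Icc 0 1) :=
      fun r hr => (hu2.1 r hr).continuousWithinAt
    have hF0 : phi p (deriv01 u 0) = 0 := by rw [hu4, phi_zero]
    have hFcont : ContinuousOn (fun s => s^m * phi p (deriv01 u s)) (Icc 0 1) :=
      ((continuous_pow m).continuousOn).mul hphicont
    have hFeq : ∀ r ∈ Icc (0:ℝ) 1, r^m * phi p (deriv01 u r) = -(Ic H m r) := by
      intro r hr
      rcases eq_or_ne r 0 with rfl | hr0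
      · rw [hF0, Ic_zero, mul_zero, neg_zero]
      · have hrpos : 0 < r := lt_of_le_of_ne hr.1 (Ne.symm hr0)
        have key := intervalIntegral.integral_eq_sub_of_hasDeriv_right_of_le
          (f := fun s => s^m * phi p (deriv01 u s)) (f' := fun t => -(t^m * H t))
          hrpos.le (hFcont.mono (Icc_subset_Icc le_rfl hr.2))
          (fun x hx => by
            have hx01 : x ∈ Ioo (0:ℝ) 1 := ⟨hx.1, lt_of_lt_of_le hx.2 hr.2⟩
            have hx' : x ∈ Icc (0:ℝ) 1 := ⟨hx01.1.le, hx01.2.le⟩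
            have hd := hu3 x hx01
            have : -(x ^ m * h x) = -(x^m * H x) := by rw [hHeq x hx']
            rw [this] at hd
            exact hd.hasDerivWithinAt)
          (((cont_integrand hHc).neg).intervalIntegrable _ _)
        have hzero : (0:ℝ)^m * phi p (deriv01 u 0) = 0 := by rw [hF0, mul_zero]
        have hInt : (∫ t in (0:ℝ)..r, -(t^m * H t)) = -(Ic H m r) := by
          rw [intervalIntegral.integral_neg, Ic]
        rw [hInt] at key
        beta_reduce at key
        rw [hzero, sub_zero] at key
        exact key.symm
    have hueq : ∀ r ∈ Icc (0:ℝ) 1, deriv01 u r = -(g r) := by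
      intro r hr
      rcases eq_or_ne r 0 with rfl | hr0
      · rw [hu4, hg0, neg_zero]
      · have hrm : r^m ≠ 0 := pow_ne_zero _ hr0
        have h1 := hFeq r hr
        have h2 : phi p (deriv01 u r) = -(Jc H m r) := by
          rw [Jc, ← neg_div, ← h1, mul_comm, mul_div_assoc, div_self hrm, mul_one]
        have h3 := congrArg (phi q) h2
        rw [hqdef, phi_phi' hp] at h3
        rw [h3, phi_neg, hgdef]
    intro a ha
    rcases eq_or_ne a 1 with rfl | ha1
    · rw [hu5, hSpeq 1 ⟨zero_le_one, le_refl 1⟩, intervalIntegral.integral_same]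
    · have halt : a < 1 := lt_of_le_of_ne ha.2 ha1
      have key := intervalIntegral.integral_eq_sub_of_hasDeriv_right_of_le
        (f := u) (f' := fun x => -(g x)) halt.le
        (hucont.mono (Icc_subset_Icc ha.1 le_rfl))
        (fun x hx => by
          have hx01 : x ∈ Ioo (0:ℝ) 1 := ⟨lt_of_le_of_lt ha.1 hx.1, hx.2⟩
          have hx' : x ∈ Icc (0:ℝ) 1 := ⟨hx01.1.le, hx01.2.le⟩
          have hdw : HasDerivWithinAt u (deriv01 u x) (Icc 0 1) x :=
            (hu1.1 x hx').hasDerivWithinAt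
          have hda : HasDerivAt u (deriv01 u x) x :=
            hdw.hasDerivAt (Icc_mem_nhds hx01.1 hx01.2)
          rw [hueq x hx'] at hda
          exact hda.hasDerivWithinAt)
        ((hgc.neg).intervalIntegrable _ _)
      rw [hu5, intervalIntegral.integral_neg, zero_sub, neg_inj] at key
      show u a = Sp p (m+1) h a
      rw [hSpeq a ha, ← key]
end
end

section
/- Let 1<p<2 and let N≥1 be an integer. Then S_p:C([0,1],ℝ)→C([0,1],ℝ) (sup norms) is continuously Fréchet differentiable, and for all h,h̄∈C([0,1],ℝ) its derivative is given by (DS_p(h)h̄)(r) = p* ∫_r^1 |S_p(h)'(s)|^{2−p} J(h̄)(s) ds for r∈[0,1]; moreover every function v:=DS_p(h)h̄ belongs to C^1([0,1],ℝ). -/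
open Set MeasureTheory Filter Topology intervalIntegral

noncomputable section

/-- Extension of a continuous function on `[0,1]` to `ℝ` (constant outside `[0,1]`). -/
def extCI (g : C(Set.Icc (0:ℝ) 1, ℝ)) : ℝ → ℝ := Set.IccExtend zero_le_one ⇑g

-- ==================== auxiliary lemmas ====================

abbrev EE := C(Set.Icc (0:ℝ) 1, ℝ)

lemma extCI_continuous (h : EE) : Continuous (extCI h) := h.continuous.Icc_extend'

lemma extCI_abs_le (h : EE) (t : ℝ) : |extCI h t| ≤ ‖h‖ := by
  have := h.norm_coe_le_norm (Set.projIcc 0 1 zero_le_one t)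
  simpa [Real.norm_eq_abs, extCI, Set.IccExtend] using this

lemma extCI_add (h k : EE) (t : ℝ) : extCI (h + k) t = extCI h t + extCI k t := rfl
lemma extCI_smul (c : ℝ) (h : EE) (t : ℝ) : extCI (c • h) t = c * extCI h t := rfl
lemma extCI_sub (h k : EE) (t : ℝ) : extCI (h - k) t = extCI h t - extCI k t := rfl

lemma Jmap_zero (N : ℕ) (h : ℝ → ℝ) : Jmap N h 0 = 0 := if_pos rfl

lemma Jmap_ne_zero (N : ℕ) (h : ℝ → ℝ) {s : ℝ} (hs : s ≠ 0) :
    Jmap N h s = ∫ t in (0:ℝ)..s, (t / s) ^ (N - 1) * h t := if_neg hs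

lemma Jmap_abs_le (N : ℕ) (h : EE) {s : ℝ} (hs : s ∈ Set.Icc (0:ℝ) 1) :
    |Jmap N (extCI h) s| ≤ s * ‖h‖ := by
  rcases eq_or_lt_of_le hs.1 with h0 | h0
  · simp [← h0, Jmap_zero]
  · rw [Jmap_ne_zero _ _ h0.ne']
    have key := intervalIntegral.norm_integral_le_of_norm_le_const
      (C := ‖h‖) (f := fun t => (t/s)^(N-1) * extCI h t) (a := 0) (b := s) ?_
    · rw [Real.norm_eq_abs] at key
      calc |∫ t in (0:ℝ)..s, (t/s)^(N-1) * extCI h t| ≤ ‖h‖ * |s - 0| := key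
        _ = s * ‖h‖ := by rw [sub_zero, abs_of_pos h0]; ring
    · intro t ht
      rw [Set.uIoc_of_le h0.le] at ht
      have h1 : (0:ℝ) ≤ t / s := div_nonneg ht.1.le h0.le
      have h2 : t / s ≤ 1 := (div_le_one h0).2 ht.2
      rw [Real.norm_eq_abs, abs_mul]
      calc |(t/s)^(N-1)| * |extCI h t| ≤ 1 * ‖h‖ := by
            refine mul_le_mul ?_ (extCI_abs_le h t) (abs_nonneg _) zero_le_one
            rw [abs_of_nonneg (pow_nonneg h1 _)]
            exact pow_le_one₀ h1 h2
        _ = ‖h‖ := one_mul _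

lemma Jmap_abs_le' (N : ℕ) (h : EE) {s : ℝ} (hs : s ∈ Set.Icc (0:ℝ) 1) :
    |Jmap N (extCI h) s| ≤ ‖h‖ :=
  (Jmap_abs_le N h hs).trans (by
    calc s * ‖h‖ ≤ 1 * ‖h‖ := mul_le_mul_of_nonneg_right hs.2 (norm_nonneg h)
      _ = ‖h‖ := one_mul _)

lemma Jmap_integrand_continuous (N : ℕ) (h : EE) (s : ℝ) :
    Continuous fun t : ℝ => (t/s)^(N-1) * extCI h t :=
  ((continuous_id.div_const s).pow _).mul (extCI_continuous h)

lemma Jmap_add (N : ℕ) (h k : EE) (s : ℝ) :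
    Jmap N (extCI (h + k)) s = Jmap N (extCI h) s + Jmap N (extCI k) s := by
  by_cases hs : s = 0
  · simp [hs, Jmap_zero]
  · rw [Jmap_ne_zero _ _ hs, Jmap_ne_zero _ _ hs, Jmap_ne_zero _ _ hs,
      ← intervalIntegral.integral_add ((Jmap_integrand_continuous N h s).intervalIntegrable _ _)
        ((Jmap_integrand_continuous N k s).intervalIntegrable _ _)]
    refine intervalIntegral.integral_congr fun t _ => ?_
    rw [extCI_add]; ring

lemma Jmap_smul (N : ℕ) (c : ℝ) (h : EE) (s : ℝ) :
    Jmap N (extCI (c • h)) s = c * Jmap N (extCI h) s := by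
  by_cases hs : s = 0
  · simp [hs, Jmap_zero]
  · rw [Jmap_ne_zero _ _ hs, Jmap_ne_zero _ _ hs, ← intervalIntegral.integral_const_mul]
    refine intervalIntegral.integral_congr fun t _ => ?_
    rw [extCI_smul]; ring

lemma Jmap_sub (N : ℕ) (h k : EE) (s : ℝ) :
    Jmap N (extCI (h - k)) s = Jmap N (extCI h) s - Jmap N (extCI k) s := by
  have h1 := Jmap_add N (h - k) k s
  rw [sub_add_cancel] at h1
  linarith

lemma Jmap_continuousOn (N : ℕ) (h : EE) :
    ContinuousOn (Jmap N (extCI h)) (Set.Icc 0 1) := by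
  have hP : Continuous fun x : ℝ => ∫ t in (0:ℝ)..x, t^(N-1) * extCI h t :=
    intervalIntegral.continuous_primitive
      (fun a b => ((continuous_pow _).mul (extCI_continuous h)).intervalIntegrable a b) 0
  intro s hs
  rcases eq_or_lt_of_le hs.1 with h0 | h0
  · -- s = 0
    subst h0
    have hb : ∀ᶠ x in 𝓝[Set.Icc (0:ℝ) 1] 0, ‖Jmap N (extCI h) x‖ ≤ x * ‖h‖ :=
      eventually_mem_nhdsWithin.mono fun x hx => by
        simpa [Real.norm_eq_abs] using Jmap_abs_le N h hx
    have hg : Tendsto (fun x : ℝ => x * ‖h‖) (𝓝[Set.Icc (0:ℝ) 1] 0) (𝓝 0) := by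
      have h1 : Continuous fun x : ℝ => x * ‖h‖ := continuous_id.mul continuous_const
      have := (h1.tendsto (0:ℝ)).mono_left (nhdsWithin_le_nhds (s := Set.Icc (0:ℝ) 1))
      simpa using this
    have := squeeze_zero_norm' hb hg
    unfold ContinuousWithinAt
    rw [Jmap_zero]
    exact this
  · -- 0 < s
    have hG : ContinuousWithinAt
        (fun x : ℝ => (x⁻¹)^(N-1) * ∫ t in (0:ℝ)..x, t^(N-1) * extCI h t)
        (Set.Icc 0 1) s :=
      (((continuousAt_inv₀ h0.ne').pow _).mul hP.continuousAt).continuousWithinAt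
    have heq : ∀ x : ℝ, 0 < x →
        Jmap N (extCI h) x = (x⁻¹)^(N-1) * ∫ t in (0:ℝ)..x, t^(N-1) * extCI h t := by
      intro x hx
      rw [Jmap_ne_zero _ _ hx.ne', ← intervalIntegral.integral_const_mul]
      refine intervalIntegral.integral_congr fun t _ => ?_
      rw [div_pow, inv_pow, div_eq_mul_inv]; ring
    refine hG.congr_of_eventuallyEq ?_ (heq s h0)
    filter_upwards [mem_nhdsWithin_of_mem_nhds (Ioi_mem_nhds h0)] with x hx
    exact heq x hx

lemma continuous_abs_rpow {q : ℝ} (hq : 0 < q) : Continuous fun x : ℝ => |x| ^ q := by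
  rw [continuous_iff_continuousAt]
  intro x
  exact (Real.continuousAt_rpow_const _ _ (Or.inr hq.le)).comp continuous_abs.continuousAt

lemma hasDerivAt_abs_rpow_mul {q : ℝ} (hq : 0 < q) (a : ℝ) :
    HasDerivAt (fun x : ℝ => |x| ^ q * x) ((q + 1) * |a| ^ q) a := by
  rcases lt_trichotomy a 0 with ha | ha | ha
  · -- a < 0 : the function agrees with x ↦ -((-x) ^ (q+1)) near a
    have hd : HasDerivAt (fun x : ℝ => -((-x) ^ (q + 1))) ((q + 1) * |a| ^ q) a := by
      have h1 : HasDerivAt (fun y : ℝ => y ^ (q + 1)) ((q + 1) * (-a) ^ (q + 1 - 1)) (-a) :=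
        Real.hasDerivAt_rpow_const (Or.inl (by linarith : (-a) ≠ 0))
      have h2 : HasDerivAt (fun x : ℝ => -x) (-1) a := (hasDerivAt_id a).neg
      have h3 := (h1.comp a h2)
      have h4 := h3.neg
      refine h4.congr_deriv ?_
      rw [abs_of_neg ha]
      have : q + 1 - 1 = q := by ring
      rw [this]
      ring
    refine hd.congr_of_eventuallyEq ?_
    filter_upwards [Iio_mem_nhds ha] with x hx
    have hx' : (0:ℝ) < -x := by simpa using hx
    rw [abs_of_neg hx, Real.rpow_add_one (by linarith : (-x) ≠ 0)]
    ring
  · -- a = 0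
    subst ha
    rw [hasDerivAt_iff_tendsto_slope]
    have : ∀ x : ℝ, x ≠ 0 → slope (fun x : ℝ => |x| ^ q * x) 0 x = |x| ^ q := by
      intro x hx
      rw [slope_def_field]
      field_simp
      simp
    have htend : Tendsto (fun x : ℝ => |x| ^ q) (𝓝[≠] (0:ℝ)) (𝓝 ((q+1) * |(0:ℝ)| ^ q)) := by
      have := ((continuous_abs_rpow hq).tendsto (0:ℝ)).mono_left
        (nhdsWithin_le_nhds (s := {(0:ℝ)}ᶜ))
      simpa [abs_zero, Real.zero_rpow hq.ne'] using this
    refine htend.congr' ?_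
    filter_upwards [self_mem_nhdsWithin] with x hx
    exact (this x hx).symm
  · -- 0 < a
    have hd : HasDerivAt (fun x : ℝ => x ^ (q + 1)) ((q + 1) * |a| ^ q) a := by
      have h1 : HasDerivAt (fun y : ℝ => y ^ (q + 1)) ((q + 1) * a ^ (q + 1 - 1)) a :=
        Real.hasDerivAt_rpow_const (Or.inl ha.ne')
      convert h1 using 2
      rw [abs_of_pos ha]
      ring_nf
    refine hd.congr_of_eventuallyEq ?_
    filter_upwards [Ioi_mem_nhds ha] with x hx
    have hx' : (0:ℝ) < x := hx
    rw [abs_of_pos hx', Real.rpow_add_one hx'.ne']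

/-- uniform continuity of `x ↦ |x|^q` on bounded sets -/
lemma unif_abs_rpow {q : ℝ} (hq : 0 < q) (M : ℝ) {ε : ℝ} (hε : 0 < ε) :
    ∃ δ > 0, ∀ x y : ℝ, |x| ≤ M → |y| ≤ M → |x - y| ≤ δ →
      abs (|x| ^ q - |y| ^ q) ≤ ε := by
  have hc : UniformContinuousOn (fun x : ℝ => |x| ^ q) (Set.Icc (-M) M) :=
    isCompact_Icc.uniformContinuousOn_of_continuous (continuous_abs_rpow hq).continuousOn
  rw [Metric.uniformContinuousOn_iff] at hc
  obtain ⟨δ, hδ0, hδ⟩ := hc ε hε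
  refine ⟨δ / 2, by positivity, fun x y hx hy hxy => ?_⟩
  have hx' : x ∈ Set.Icc (-M) M := abs_le.1 hx
  have hy' : y ∈ Set.Icc (-M) M := abs_le.1 hy
  have : dist x y < δ := by rw [Real.dist_eq]; linarith
  have := hδ x hx' y hy' this
  rw [Real.dist_eq] at this
  exact this.le

/-- Mean value/Taylor remainder bound for `Φ(x) = |x|^q x`. -/
lemma taylor_bound {q : ℝ} (hq : 0 < q) (a b C : ℝ) (hC : 0 ≤ C)
    (hbd : ∀ c : ℝ, |c - a| ≤ |b| → abs ((q+1) * |c| ^ q - (q+1) * |a| ^ q) ≤ C) :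
    abs (|a+b| ^ q * (a+b) - |a| ^ q * a - (q+1) * |a| ^ q * b) ≤ C * |b| := by
  set g : ℝ → ℝ := fun x => |x| ^ q * x - (q+1) * |a| ^ q * x with hg
  have hgd : ∀ x : ℝ, HasDerivAt g ((q+1) * |x| ^ q - (q+1) * |a| ^ q) x := by
    intro x
    have h2 : HasDerivAt (fun x : ℝ => (q+1) * |a| ^ q * x) ((q+1) * |a| ^ q) x := by
      simpa using (hasDerivAt_id x).const_mul ((q+1) * |a| ^ q)
    exact (hasDerivAt_abs_rpow_mul hq x).sub h2
  have key := Convex.norm_image_sub_le_of_norm_hasDerivWithin_le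
    (f := g) (f' := fun x => (q+1) * |x| ^ q - (q+1) * |a| ^ q) (C := C)
    (s := Set.Icc (a - |b|) (a + |b|))
    (fun x _ => (hgd x).hasDerivWithinAt)
    (fun x hx => by
      rw [Real.norm_eq_abs]
      refine hbd x ?_
      rw [abs_sub_le_iff]
      constructor <;> [linarith [hx.2]; linarith [hx.1]])
    (convex_Icc _ _)
    (⟨by linarith [abs_nonneg b], by linarith [abs_nonneg b]⟩ : a ∈ Set.Icc (a - |b|) (a + |b|))
    (⟨by linarith [neg_abs_le b], by linarith [le_abs_self b]⟩ :
      a + b ∈ Set.Icc (a - |b|) (a + |b|))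
  rw [Real.norm_eq_abs, Real.norm_eq_abs] at key
  have h1 : g (a + b) - g a = |a+b| ^ q * (a+b) - |a| ^ q * a - (q+1) * |a| ^ q * b := by
    simp only [hg]; ring
  have h2 : a + b - a = b := by ring
  rw [h1, h2] at key
  exact key

/-- FTC on [0,1] for the primitive `r ↦ ∫_r^1 F`. -/
lemma ftc01 {F : ℝ → ℝ} (hF : ContinuousOn F (Set.Icc 0 1)) {a : ℝ} (ha : a ∈ Set.Icc (0:ℝ) 1) :
    HasDerivWithinAt (fun u => ∫ x in u..(1:ℝ), F x) (-F a) (Set.Icc 0 1) a := by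
  have hint : IntervalIntegrable F volume a 1 :=
    (hF.mono (Set.uIcc_subset_Icc ha (Set.right_mem_Icc.2 zero_le_one))).intervalIntegrable
  have hmeasIcc : AEStronglyMeasurable F (volume.restrict (Set.Icc (0:ℝ) 1)) :=
    hF.aestronglyMeasurable measurableSet_Icc
  rcases eq_or_lt_of_le ha.1 with h0 | h0
  · -- a = 0
    subst h0
    have hmem : Set.Icc (0:ℝ) 1 ∈ 𝓝[>] (0:ℝ) := by
      refine mem_nhdsWithin.2 ⟨Set.Iio 1, isOpen_Iio, Set.mem_Iio.2 zero_lt_one, ?_⟩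
      rintro x ⟨hx1, hx2⟩
      exact ⟨le_of_lt hx2, le_of_lt hx1⟩
    have hmeas : StronglyMeasurableAtFilter F (𝓝[>] (0:ℝ)) := ⟨_, hmem, hmeasIcc⟩
    have hcw : ContinuousWithinAt F (Set.Ioi (0:ℝ)) 0 :=
      (hF 0 ha).mono_of_mem_nhdsWithin hmem
    exact (integral_hasDerivWithinAt_left hint hmeas hcw).mono Set.Icc_subset_Ici_self
  rcases eq_or_lt_of_le ha.2 with h1 | h1
  · -- a = 1
    subst h1
    have hmem : Set.Icc (0:ℝ) 1 ∈ 𝓝[≤] (1:ℝ) := by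
      refine mem_nhdsWithin.2 ⟨Set.Ioi 0, isOpen_Ioi, Set.mem_Ioi.2 zero_lt_one, ?_⟩
      rintro x ⟨hx1, hx2⟩
      exact ⟨le_of_lt hx1, hx2⟩
    have hmeas : StronglyMeasurableAtFilter F (𝓝[≤] (1:ℝ)) := ⟨_, hmem, hmeasIcc⟩
    have hcw : ContinuousWithinAt F (Set.Iic (1:ℝ)) 1 :=
      (hF 1 ha).mono_of_mem_nhdsWithin hmem
    exact (integral_hasDerivWithinAt_left hint hmeas hcw).mono Set.Icc_subset_Iic_self
  · -- interior
    have hmem : Set.Icc (0:ℝ) 1 ∈ 𝓝 a := Icc_mem_nhds h0 h1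
    have hmeas : StronglyMeasurableAtFilter F (𝓝 a) := ⟨_, hmem, hmeasIcc⟩
    have hca : ContinuousAt F a := (hF a ha).continuousAt hmem
    exact (integral_hasDerivAt_left hint hmeas hca).hasDerivWithinAt
-- ==================== q exponent ====================

/-- The exponent `q = p' - 2` where `p' = p/(p-1)`. -/
def qexp (p : ℝ) : ℝ := p / (p - 1) - 2

lemma qexp_pos {p : ℝ} (hp1 : 1 < p) (hp2 : p < 2) : 0 < qexp p := by
  have hp0 : (0:ℝ) < p - 1 := by linarith
  have h2 : qexp p = (2 - p) / (p - 1) := by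
    rw [qexp]; field_simp; ring
  rw [h2]
  exact div_pos (by linarith) hp0

lemma qexp_add_one {p : ℝ} (hp1 : 1 < p) : qexp p + 1 = 1 / (p - 1) := by
  have hp0 : (0:ℝ) < p - 1 := by linarith
  rw [qexp]; field_simp; ring

lemma phi_eq (p x : ℝ) : phi (p / (p - 1)) x = |x| ^ (qexp p) * x := rfl

-- ==================== the integrands ====================

/-- integrand of `S_p`. -/
def Ffun (p : ℝ) (N : ℕ) (h : EE) : ℝ → ℝ :=
  fun s => phi (p / (p - 1)) (Jmap N (extCI h) s)

/-- integrand of the derivative. -/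
def Gfun (p : ℝ) (N : ℕ) (h k : EE) : ℝ → ℝ :=
  fun s => |Jmap N (extCI h) s| ^ (qexp p) * Jmap N (extCI k) s

/-- the (unbundled) derivative map. -/
def DSfun (p : ℝ) (N : ℕ) (h k : EE) : ℝ → ℝ :=
  fun r => (1 / (p - 1)) * ∫ s in r..(1:ℝ), Gfun p N h k s

lemma Ffun_contOn {p : ℝ} (hp1 : 1 < p) (hp2 : p < 2) (N : ℕ) (h : EE) :
    ContinuousOn (Ffun p N h) (Set.Icc 0 1) := by
  have hphi : Continuous (phi (p / (p - 1))) := by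
    have h1 : Continuous fun x : ℝ => |x| ^ (qexp p) * x :=
      (continuous_abs_rpow (qexp_pos hp1 hp2)).mul continuous_id
    have h2 : (phi (p / (p - 1))) = fun x : ℝ => |x| ^ (qexp p) * x :=
      funext fun x => phi_eq p x
    rw [h2]; exact h1
  exact hphi.comp_continuousOn (Jmap_continuousOn N h)

lemma Gfun_contOn {p : ℝ} (hp1 : 1 < p) (hp2 : p < 2) (N : ℕ) (h k : EE) :
    ContinuousOn (Gfun p N h k) (Set.Icc 0 1) :=
  (((continuous_abs_rpow (qexp_pos hp1 hp2)).comp_continuousOn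
    (Jmap_continuousOn N h)).mul (Jmap_continuousOn N k))

lemma intervalIntegrable01 {F : ℝ → ℝ} (hF : ContinuousOn F (Set.Icc 0 1)) {r : ℝ}
    (hr : r ∈ Set.Icc (0:ℝ) 1) : IntervalIntegrable F MeasureTheory.volume r 1 :=
  (hF.mono (Set.uIcc_subset_Icc hr (Set.right_mem_Icc.2 zero_le_one))).intervalIntegrable

lemma Gfun_abs_le {p : ℝ} (hp1 : 1 < p) (hp2 : p < 2) (N : ℕ) (h k : EE) {s : ℝ}
    (hs : s ∈ Set.Icc (0:ℝ) 1) : |Gfun p N h k s| ≤ ‖h‖ ^ (qexp p) * ‖k‖ := by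
  rw [Gfun, abs_mul, abs_of_nonneg (Real.rpow_nonneg (abs_nonneg _) _)]
  exact mul_le_mul (Real.rpow_le_rpow (abs_nonneg _) (Jmap_abs_le' N h hs) (qexp_pos hp1 hp2).le)
    (Jmap_abs_le' N k hs) (abs_nonneg _) (Real.rpow_nonneg (norm_nonneg h) _)

lemma uIoc_mem01 {r s : ℝ} (hr : r ∈ Set.Icc (0:ℝ) 1) (hs : s ∈ Set.uIoc r 1) :
    s ∈ Set.Icc (0:ℝ) 1 := by
  rw [Set.uIoc_of_le hr.2] at hs
  exact ⟨hr.1.trans hs.1.le, hs.2⟩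

lemma integral_Gfun_abs_le {p : ℝ} (hp1 : 1 < p) (hp2 : p < 2) (N : ℕ) (h k : EE) {r : ℝ}
    (hr : r ∈ Set.Icc (0:ℝ) 1) :
    |∫ s in r..(1:ℝ), Gfun p N h k s| ≤ ‖h‖ ^ (qexp p) * ‖k‖ := by
  have hC : (0:ℝ) ≤ ‖h‖ ^ (qexp p) * ‖k‖ :=
    mul_nonneg (Real.rpow_nonneg (norm_nonneg h) _) (norm_nonneg k)
  have key := intervalIntegral.norm_integral_le_of_norm_le_const
    (C := ‖h‖ ^ (qexp p) * ‖k‖) (f := Gfun p N h k) (a := r) (b := 1)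
    (fun s hs => by rw [Real.norm_eq_abs]; exact Gfun_abs_le hp1 hp2 N h k (uIoc_mem01 hr hs))
  rw [Real.norm_eq_abs] at key
  refine key.trans ?_
  have h1 : |(1:ℝ) - r| ≤ 1 := by
    rw [abs_of_nonneg (by linarith [hr.2])]; linarith [hr.1]
  calc ‖h‖ ^ (qexp p) * ‖k‖ * |1 - r| ≤ ‖h‖ ^ (qexp p) * ‖k‖ * 1 :=
        mul_le_mul_of_nonneg_left h1 hC
    _ = ‖h‖ ^ (qexp p) * ‖k‖ := mul_one _

lemma DSfun_hasDeriv {p : ℝ} (hp1 : 1 < p) (hp2 : p < 2) (N : ℕ) (h k : EE) {r : ℝ}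
    (hr : r ∈ Set.Icc (0:ℝ) 1) :
    HasDerivWithinAt (DSfun p N h k) ((1 / (p - 1)) * -(Gfun p N h k r)) (Set.Icc 0 1) r :=
  (ftc01 (Gfun_contOn hp1 hp2 N h k) hr).const_mul (1 / (p - 1))

lemma Sp_hasDeriv {p : ℝ} (hp1 : 1 < p) (hp2 : p < 2) (N : ℕ) (h : EE) {r : ℝ}
    (hr : r ∈ Set.Icc (0:ℝ) 1) :
    HasDerivWithinAt (Sp p N (extCI h)) (-(phi (p / (p - 1)) (Jmap N (extCI h) r)))
      (Set.Icc 0 1) r :=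
  ftc01 (Ffun_contOn hp1 hp2 N h) hr

lemma deriv01_Sp {p : ℝ} (hp1 : 1 < p) (hp2 : p < 2) (N : ℕ) (h : EE) {r : ℝ}
    (hr : r ∈ Set.Icc (0:ℝ) 1) :
    deriv01 (Sp p N (extCI h)) r = -(phi (p / (p - 1)) (Jmap N (extCI h) r)) :=
  (Sp_hasDeriv hp1 hp2 N h hr).derivWithin ((uniqueDiffOn_Icc zero_lt_one) r hr)

lemma weight_eq {p : ℝ} (hp1 : 1 < p) (hp2 : p < 2) (N : ℕ) (h : EE) {s : ℝ}
    (hs : s ∈ Set.Icc (0:ℝ) 1) :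
    |deriv01 (Sp p N (extCI h)) s| ^ (2 - p) = |Jmap N (extCI h) s| ^ (qexp p) := by
  have hp0 : (0:ℝ) < p - 1 := by linarith
  rw [deriv01_Sp hp1 hp2 N h hs, abs_neg]
  set x := Jmap N (extCI h) s with hx
  by_cases hx0 : x = 0
  · rw [hx0]
    rw [phi_eq]
    simp only [abs_zero, mul_zero]
    rw [Real.zero_rpow (by linarith : (2:ℝ) - p ≠ 0),
      Real.zero_rpow (qexp_pos hp1 hp2).ne']
  · have hax : (0:ℝ) < |x| := abs_pos.2 hx0
    have h1 : |phi (p / (p - 1)) x| = |x| ^ (p / (p - 1) - 1) := by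
      rw [phi_eq, abs_mul, abs_of_nonneg (Real.rpow_nonneg (abs_nonneg x) _)]
      rw [← Real.rpow_add_one hax.ne']
      congr 1
      rw [qexp]; ring
    rw [h1, ← Real.rpow_mul (abs_nonneg x)]
    congr 1
    rw [qexp]; field_simp; ring
-- ==================== bundled maps ====================

/-- `S_p` as a map `C([0,1]) → C([0,1])`. -/
def SC (p : ℝ) (N : ℕ) (hp1 : 1 < p) (hp2 : p < 2) (h : EE) : EE :=
  ⟨fun r => Sp p N (extCI h) r,
    (ContinuousOn.restrict (fun r hr => (Sp_hasDeriv hp1 hp2 N h hr).continuousWithinAt))⟩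

/-- candidate derivative value, as a continuous map. -/
def DSC0 (p : ℝ) (N : ℕ) (hp1 : 1 < p) (hp2 : p < 2) (h k : EE) : EE :=
  ⟨fun r => DSfun p N h k r,
    (ContinuousOn.restrict (fun r hr => (DSfun_hasDeriv hp1 hp2 N h k hr).continuousWithinAt))⟩

lemma DSC0_add (p : ℝ) (N : ℕ) (hp1 : 1 < p) (hp2 : p < 2) (h k₁ k₂ : EE) :
    DSC0 p N hp1 hp2 h (k₁ + k₂) = DSC0 p N hp1 hp2 h k₁ + DSC0 p N hp1 hp2 h k₂ := by
  ext r
  show DSfun p N h (k₁ + k₂) r = DSfun p N h k₁ r + DSfun p N h k₂ r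
  rw [DSfun, DSfun, DSfun]
  have e1 : ∫ s in (r:ℝ)..1, Gfun p N h (k₁ + k₂) s
      = ∫ s in (r:ℝ)..1, (Gfun p N h k₁ s + Gfun p N h k₂ s) :=
    intervalIntegral.integral_congr fun s _ => by
      rw [Gfun, Gfun, Gfun, Jmap_add, mul_add]
  rw [e1, intervalIntegral.integral_add
    (intervalIntegrable01 (Gfun_contOn hp1 hp2 N h k₁) r.2)
    (intervalIntegrable01 (Gfun_contOn hp1 hp2 N h k₂) r.2)]
  ring

lemma DSC0_smul (p : ℝ) (N : ℕ) (hp1 : 1 < p) (hp2 : p < 2) (h : EE) (c : ℝ) (k : EE) :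
    DSC0 p N hp1 hp2 h (c • k) = c • DSC0 p N hp1 hp2 h k := by
  ext r
  show DSfun p N h (c • k) r = c * DSfun p N h k r
  rw [DSfun, DSfun]
  have e1 : ∫ s in (r:ℝ)..1, Gfun p N h (c • k) s
      = ∫ s in (r:ℝ)..1, c * Gfun p N h k s :=
    intervalIntegral.integral_congr fun s _ => by
      rw [Gfun, Gfun, Jmap_smul]; ring
  rw [e1, intervalIntegral.integral_const_mul]
  ring

lemma DSC0_norm_le (p : ℝ) (N : ℕ) (hp1 : 1 < p) (hp2 : p < 2) (h k : EE) :
    ‖DSC0 p N hp1 hp2 h k‖ ≤ (1 / (p - 1)) * ‖h‖ ^ (qexp p) * ‖k‖ := by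
  have hp0 : (0:ℝ) < p - 1 := by linarith
  have hC : (0:ℝ) ≤ (1 / (p - 1)) * ‖h‖ ^ (qexp p) * ‖k‖ :=
    mul_nonneg (mul_nonneg (by positivity) (Real.rpow_nonneg (norm_nonneg h) _)) (norm_nonneg k)
  refine (ContinuousMap.norm_le _ hC).2 fun r => ?_
  show ‖DSfun p N h k ↑r‖ ≤ _
  rw [Real.norm_eq_abs, DSfun, abs_mul, abs_of_pos (by positivity : (0:ℝ) < 1 / (p - 1))]
  calc 1 / (p - 1) * |∫ s in (r:ℝ)..1, Gfun p N h k s|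
      ≤ 1 / (p - 1) * (‖h‖ ^ (qexp p) * ‖k‖) :=
        mul_le_mul_of_nonneg_left (integral_Gfun_abs_le hp1 hp2 N h k r.2) (by positivity)
    _ = (1 / (p - 1)) * ‖h‖ ^ (qexp p) * ‖k‖ := by ring

/-- the candidate Fréchet derivative as a continuous linear map. -/
def DSL (p : ℝ) (N : ℕ) (hp1 : 1 < p) (hp2 : p < 2) (h : EE) : EE →L[ℝ] EE :=
  LinearMap.mkContinuous
    { toFun := fun k => DSC0 p N hp1 hp2 h k
      map_add' := fun k₁ k₂ => DSC0_add p N hp1 hp2 h k₁ k₂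
      map_smul' := fun c k => DSC0_smul p N hp1 hp2 h c k }
    ((1 / (p - 1)) * ‖h‖ ^ (qexp p))
    (fun k => DSC0_norm_le p N hp1 hp2 h k)

lemma DSL_apply (p : ℝ) (N : ℕ) (hp1 : 1 < p) (hp2 : p < 2) (h k : EE)
    (r : Set.Icc (0:ℝ) 1) : DSL p N hp1 hp2 h k r = DSfun p N h k ↑r := rfl

/-- The remainder identity. -/
lemma remainder_eq {p : ℝ} (hp1 : 1 < p) (hp2 : p < 2) (N : ℕ) (h k : EE) {r : ℝ}
    (hr : r ∈ Set.Icc (0:ℝ) 1) :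
    Sp p N (extCI (h + k)) r - Sp p N (extCI h) r - DSfun p N h k r
      = ∫ s in r..(1:ℝ),
          (phi (p / (p - 1)) (Jmap N (extCI h) s + Jmap N (extCI k) s)
            - phi (p / (p - 1)) (Jmap N (extCI h) s) - (qexp p + 1) * Gfun p N h k s) := by
  have i1 : IntervalIntegrable (Ffun p N (h + k)) MeasureTheory.volume r 1 :=
    intervalIntegrable01 (Ffun_contOn hp1 hp2 N (h + k)) hr
  have i2 : IntervalIntegrable (Ffun p N h) MeasureTheory.volume r 1 :=
    intervalIntegrable01 (Ffun_contOn hp1 hp2 N h) hr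
  have i3 : IntervalIntegrable (fun s => (qexp p + 1) * Gfun p N h k s)
      MeasureTheory.volume r 1 :=
    (intervalIntegrable01 (Gfun_contOn hp1 hp2 N h k) hr).const_mul _
  have e0 : DSfun p N h k r = ∫ s in r..(1:ℝ), (qexp p + 1) * Gfun p N h k s := by
    rw [DSfun, intervalIntegral.integral_const_mul, qexp_add_one hp1]
  rw [e0]
  rw [show Sp p N (extCI (h + k)) r = ∫ s in r..(1:ℝ), Ffun p N (h + k) s from rfl,
    show Sp p N (extCI h) r = ∫ s in r..(1:ℝ), Ffun p N h s from rfl]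
  rw [← intervalIntegral.integral_sub i1 i2,
    ← intervalIntegral.integral_sub (i1.sub i2) i3]
  refine intervalIntegral.integral_congr fun s _ => ?_
  rw [Ffun, Ffun, Jmap_add]
lemma SC_hasFDerivAt {p : ℝ} (hp1 : 1 < p) (hp2 : p < 2) (N : ℕ) (h : EE) :
    HasFDerivAt (SC p N hp1 hp2) (DSL p N hp1 hp2 h) h := by
  have hp0 : (0:ℝ) < p - 1 := by linarith
  have hq := qexp_pos hp1 hp2
  have hq1 : (0:ℝ) < qexp p + 1 := by linarith
  rw [hasFDerivAt_iff_isLittleO_nhds_zero, Asymptotics.isLittleO_iff]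
  intro ε hε
  obtain ⟨δ, hδ0, hδ⟩ := unif_abs_rpow hq (‖h‖ + 1) (div_pos hε hq1)
  rw [Metric.eventually_nhds_iff]
  refine ⟨min δ 1, lt_min hδ0 one_pos, fun {k} hk => ?_⟩
  rw [dist_zero_right] at hk
  have hk1 : ‖k‖ ≤ 1 := (hk.trans_le (min_le_right _ _)).le
  have hkδ : ‖k‖ ≤ δ := (hk.trans_le (min_le_left _ _)).le
  have hεk : (0:ℝ) ≤ ε * ‖k‖ := mul_nonneg hε.le (norm_nonneg k)
  refine (ContinuousMap.norm_le _ hεk).2 fun r => ?_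
  rw [ContinuousMap.sub_apply, ContinuousMap.sub_apply]
  have hval : SC p N hp1 hp2 (h + k) r - SC p N hp1 hp2 h r - DSL p N hp1 hp2 h k r
      = Sp p N (extCI (h + k)) ↑r - Sp p N (extCI h) ↑r - DSfun p N h k ↑r := rfl
  rw [hval, remainder_eq hp1 hp2 N h k r.2, Real.norm_eq_abs]
  have key := intervalIntegral.norm_integral_le_of_norm_le_const (C := ε * ‖k‖)
    (f := fun s => phi (p / (p - 1)) (Jmap N (extCI h) s + Jmap N (extCI k) s)
      - phi (p / (p - 1)) (Jmap N (extCI h) s) - (qexp p + 1) * Gfun p N h k s)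
    (a := (r:ℝ)) (b := 1) ?_
  · rw [Real.norm_eq_abs] at key
    refine key.trans ?_
    have h1 : |(1:ℝ) - (r:ℝ)| ≤ 1 := by
      rw [abs_of_nonneg (by linarith [r.2.2])]; linarith [r.2.1]
    calc ε * ‖k‖ * |1 - (r:ℝ)| ≤ ε * ‖k‖ * 1 := mul_le_mul_of_nonneg_left h1 hεk
      _ = ε * ‖k‖ := mul_one _
  · intro s hs
    have hs' : s ∈ Set.Icc (0:ℝ) 1 := uIoc_mem01 r.2 hs
    set a := Jmap N (extCI h) s with ha
    set b := Jmap N (extCI k) s with hb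
    have haM : |a| ≤ ‖h‖ := Jmap_abs_le' N h hs'
    have hbM : |b| ≤ ‖k‖ := Jmap_abs_le' N k hs'
    have hbd : ∀ c : ℝ, |c - a| ≤ |b| →
        abs ((qexp p + 1) * |c| ^ (qexp p) - (qexp p + 1) * |a| ^ (qexp p)) ≤ ε := by
      intro c hc
      have hcM : |c| ≤ ‖h‖ + 1 := by
        have : |c| ≤ |a| + |b| := by
          calc |c| = |(c - a) + a| := by ring_nf
            _ ≤ |c - a| + |a| := abs_add_le _ _
            _ ≤ |b| + |a| := by linarith
            _ = |a| + |b| := by ring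
        linarith
      have haM' : |a| ≤ ‖h‖ + 1 := by linarith
      have hca : |c - a| ≤ δ := hc.trans (hbM.trans hkδ)
      have := hδ c a hcM haM' hca
      calc abs ((qexp p + 1) * |c| ^ (qexp p) - (qexp p + 1) * |a| ^ (qexp p))
          = (qexp p + 1) * abs (|c| ^ (qexp p) - |a| ^ (qexp p)) := by
            rw [← mul_sub, abs_mul, abs_of_pos hq1]
        _ ≤ (qexp p + 1) * (ε / (qexp p + 1)) :=
            mul_le_mul_of_nonneg_left this hq1.le
        _ = ε := by field_simp
    have key2 := taylor_bound hq a b ε hε.le hbd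
    have hshape : phi (p / (p - 1)) (a + b) - phi (p / (p - 1)) a
        - (qexp p + 1) * Gfun p N h k s
        = |a + b| ^ (qexp p) * (a + b) - |a| ^ (qexp p) * a
          - (qexp p + 1) * |a| ^ (qexp p) * b := by
      rw [phi_eq, phi_eq, Gfun, ← ha, ← hb]; ring
    rw [Real.norm_eq_abs]
    have hbeta : (fun s => phi (p / (p - 1)) (Jmap N (extCI h) s + Jmap N (extCI k) s)
        - phi (p / (p - 1)) (Jmap N (extCI h) s) - (qexp p + 1) * Gfun p N h k s) s
        = phi (p / (p - 1)) (a + b) - phi (p / (p - 1)) a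
          - (qexp p + 1) * Gfun p N h k s := rfl
    rw [hshape]
    calc abs (|a + b| ^ (qexp p) * (a + b) - |a| ^ (qexp p) * a
          - (qexp p + 1) * |a| ^ (qexp p) * b) ≤ ε * |b| := key2
      _ ≤ ε * ‖k‖ := mul_le_mul_of_nonneg_left hbM hε.le

lemma DSL_continuous {p : ℝ} (hp1 : 1 < p) (hp2 : p < 2) (N : ℕ) :
    Continuous (DSL p N hp1 hp2) := by
  have hp0 : (0:ℝ) < p - 1 := by linarith
  have hq := qexp_pos hp1 hp2
  have hq1 : (0:ℝ) < qexp p + 1 := by linarith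
  have main : ∀ (h0 : EE), ∀ ε > 0, ∃ δ > 0, ∀ h : EE, dist h h0 < δ →
      dist (DSL p N hp1 hp2 h) (DSL p N hp1 hp2 h0) < ε := by
    intro h0 ε hε
    obtain ⟨δ, hδ0, hδ⟩ := unif_abs_rpow hq (‖h0‖ + 1) (div_pos (half_pos hε) hq1)
    refine ⟨min δ 1, lt_min hδ0 one_pos, fun h hdist => ?_⟩
    rw [dist_eq_norm] at hdist
    have hgd : dist (DSL p N hp1 hp2 h) (DSL p N hp1 hp2 h0)
        = ‖DSL p N hp1 hp2 h - DSL p N hp1 hp2 h0‖ :=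
      dist_eq_norm (DSL p N hp1 hp2 h) (DSL p N hp1 hp2 h0)
    rw [hgd]
    have hd1 : ‖h - h0‖ ≤ δ := (hdist.trans_le (min_le_left _ _)).le
    have hd2 : ‖h - h0‖ ≤ 1 := (hdist.trans_le (min_le_right _ _)).le
    have key : ‖DSL p N hp1 hp2 h - DSL p N hp1 hp2 h0‖ ≤ ε / 2 := by
      refine ContinuousLinearMap.opNorm_le_bound _ (half_pos hε).le fun k => ?_
      rw [ContinuousLinearMap.sub_apply]
      have hC : (0:ℝ) ≤ ε / 2 * ‖k‖ := mul_nonneg (half_pos hε).le (norm_nonneg k)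
      refine (ContinuousMap.norm_le _ hC).2 fun r => ?_
      rw [ContinuousMap.sub_apply]
      have hval : DSL p N hp1 hp2 h k r - DSL p N hp1 hp2 h0 k r
          = (1 / (p - 1)) * ∫ s in (r:ℝ)..1, (Gfun p N h k s - Gfun p N h0 k s) := by
        rw [DSL_apply, DSL_apply, DSfun, DSfun, ← mul_sub,
          intervalIntegral.integral_sub
            (intervalIntegrable01 (Gfun_contOn hp1 hp2 N h k) r.2)
            (intervalIntegrable01 (Gfun_contOn hp1 hp2 N h0 k) r.2)]
      rw [hval, Real.norm_eq_abs, abs_mul, abs_of_pos (by positivity : (0:ℝ) < 1 / (p - 1))]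
      have hbound : ∀ s ∈ Set.uIoc (r:ℝ) 1,
          ‖Gfun p N h k s - Gfun p N h0 k s‖ ≤ ε / 2 / (qexp p + 1) * ‖k‖ := by
        intro s hs
        have hs' : s ∈ Set.Icc (0:ℝ) 1 := uIoc_mem01 r.2 hs
        have hfact : Gfun p N h k s - Gfun p N h0 k s
            = (|Jmap N (extCI h) s| ^ (qexp p) - |Jmap N (extCI h0) s| ^ (qexp p))
              * Jmap N (extCI k) s := by
          rw [Gfun, Gfun]; ring
        rw [Real.norm_eq_abs, hfact, abs_mul]
        have h1 : |Jmap N (extCI h) s| ≤ ‖h0‖ + 1 := by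
          refine (Jmap_abs_le' N h hs').trans ?_
          calc ‖h‖ = ‖h0 + (h - h0)‖ := by rw [add_sub_cancel]
            _ ≤ ‖h0‖ + ‖h - h0‖ := norm_add_le _ _
            _ ≤ ‖h0‖ + 1 := by linarith
        have h2 : |Jmap N (extCI h0) s| ≤ ‖h0‖ + 1 :=
          (Jmap_abs_le' N h0 hs').trans (by linarith [norm_nonneg h0])
        have h3 : |Jmap N (extCI h) s - Jmap N (extCI h0) s| ≤ δ := by
          rw [← Jmap_sub]
          exact (Jmap_abs_le' N (h - h0) hs').trans hd1
        have h4 := hδ _ _ h1 h2 h3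
        exact mul_le_mul h4 (Jmap_abs_le' N k hs') (abs_nonneg _) (by positivity)
      have key2 := intervalIntegral.norm_integral_le_of_norm_le_const hbound
      rw [Real.norm_eq_abs] at key2
      have h5 : |(1:ℝ) - (r:ℝ)| ≤ 1 := by
        rw [abs_of_nonneg (by linarith [r.2.2])]; linarith [r.2.1]
      have h6 : |∫ s in (r:ℝ)..1, (Gfun p N h k s - Gfun p N h0 k s)|
          ≤ ε / 2 / (qexp p + 1) * ‖k‖ := by
        refine key2.trans ?_
        calc ε / 2 / (qexp p + 1) * ‖k‖ * |1 - (r:ℝ)|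
            ≤ ε / 2 / (qexp p + 1) * ‖k‖ * 1 :=
              mul_le_mul_of_nonneg_left h5 (by positivity)
          _ = ε / 2 / (qexp p + 1) * ‖k‖ := mul_one _
      calc 1 / (p - 1) * |∫ s in (r:ℝ)..1, (Gfun p N h k s - Gfun p N h0 k s)|
          ≤ 1 / (p - 1) * (ε / 2 / (qexp p + 1) * ‖k‖) :=
            mul_le_mul_of_nonneg_left h6 (by positivity)
        _ = ε / 2 * ‖k‖ := by
            rw [← qexp_add_one hp1]
            field_simp
    linarith [key]
  exact Metric.continuous_iff.2 main
lemma DSfun_formula {p : ℝ} (hp1 : 1 < p) (hp2 : p < 2) (N : ℕ) (h k : EE) {r : ℝ}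
    (hr : r ∈ Set.Icc (0:ℝ) 1) :
    DSfun p N h k r = (1 / (p - 1)) *
      ∫ s in r..(1:ℝ), |deriv01 (Sp p N (extCI h)) s| ^ (2 - p) * Jmap N (extCI k) s := by
  rw [DSfun]
  congr 1
  refine intervalIntegral.integral_congr fun s hs => ?_
  have hs' : s ∈ Set.Icc (0:ℝ) 1 := by
    rw [Set.uIcc_of_le hr.2] at hs
    exact ⟨hr.1.trans hs.1, hs.2⟩
  rw [Gfun, weight_eq hp1 hp2 N h hs']


/-- for `1 < p < 2`, `S_p : C([0,1]) → C([0,1])` is continuously Fréchet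
differentiable, with the stated integral formula for the derivative, and each
`v = DS_p(h)h̄` is `C^1` on `[0,1]`. -/
theorem stmt_4 (p : ℝ) (hp1 : 1 < p) (hp2 : p < 2) (N : ℕ) (hN : 1 ≤ N) :
    ∃ (S : C(Set.Icc (0:ℝ) 1, ℝ) → C(Set.Icc (0:ℝ) 1, ℝ))
      (DS : C(Set.Icc (0:ℝ) 1, ℝ) → C(Set.Icc (0:ℝ) 1, ℝ) →L[ℝ] C(Set.Icc (0:ℝ) 1, ℝ)),
      -- S is (the restriction of) S_p
      (∀ (h : C(Set.Icc (0:ℝ) 1, ℝ)) (r : Set.Icc (0:ℝ) 1), S h r = Sp p N (extCI h) r) ∧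
      -- S is Fréchet differentiable with continuous derivative DS
      (∀ h : C(Set.Icc (0:ℝ) 1, ℝ), HasFDerivAt S (DS h) h) ∧
      Continuous DS ∧
      -- formula for the derivative
      (∀ (h hbar : C(Set.Icc (0:ℝ) 1, ℝ)) (r : Set.Icc (0:ℝ) 1),
        DS h hbar r = (1 / (p - 1)) *
          ∫ s in (r:ℝ)..1,
            |deriv01 (Sp p N (extCI h)) s| ^ (2 - p) * Jmap N (extCI hbar) s) ∧
      -- each v = DS_p(h) h̄ belongs to C^1([0,1])
      (∀ h hbar : C(Set.Icc (0:ℝ) 1, ℝ),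
        C1on01 (fun r : ℝ => (1 / (p - 1)) *
          ∫ s in r..(1:ℝ),
            |deriv01 (Sp p N (extCI h)) s| ^ (2 - p) * Jmap N (extCI hbar) s)) := by
  refine ⟨SC p N hp1 hp2, DSL p N hp1 hp2, fun h r => rfl,
    fun h => SC_hasFDerivAt hp1 hp2 N h, DSL_continuous hp1 hp2 N, ?_, ?_⟩
  · intro h hbar r
    have : DSL p N hp1 hp2 h hbar r = DSfun p N h hbar ↑r := rfl
    rw [this, DSfun_formula hp1 hp2 N h hbar r.2]
  · intro h hbar
    set W : ℝ → ℝ := fun s => |deriv01 (Sp p N (extCI h)) s| ^ (2 - p)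
      * Jmap N (extCI hbar) s with hWdef
    have hWeq : Set.EqOn W (Gfun p N h hbar) (Set.Icc 0 1) := fun s hs => by
      rw [hWdef]
      show |deriv01 (Sp p N (extCI h)) s| ^ (2 - p) * Jmap N (extCI hbar) s
          = Gfun p N h hbar s
      rw [weight_eq hp1 hp2 N h hs, Gfun]
    have hWcont : ContinuousOn W (Set.Icc 0 1) :=
      (Gfun_contOn hp1 hp2 N h hbar).congr hWeq
    have hder : ∀ r ∈ Set.Icc (0:ℝ) 1,
        HasDerivWithinAt (fun r : ℝ => (1 / (p - 1)) * ∫ s in r..(1:ℝ), W s)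
          ((1 / (p - 1)) * -(W r)) (Set.Icc 0 1) r :=
      fun r hr => (ftc01 hWcont hr).const_mul (1 / (p - 1))
    constructor
    · exact fun r hr => (hder r hr).differentiableWithinAt
    · have hc : ContinuousOn (fun r : ℝ => (1 / (p - 1)) * -(W r)) (Set.Icc 0 1) :=
        continuousOn_const.mul hWcont.neg
      refine hc.congr fun r hr => ?_
      exact (hder r hr).derivWithin ((uniqueDiffOn_Icc zero_lt_one) r hr)
end
end

section
/- Let p>1, let N≥1 be an integer, and let f:[0,1]×ℝ→ℝ be continuous with f(r,ξ)ξ>0 for all r∈[0,1] and ξ≠0, and f(r,0)=0 for all r∈[0,1]. Let (λ,u) be a nontrivial solution of (P) with λ>0 such that u≥0 on [0,1] (respectively u≤0 on [0,1]). Then u(r)>0 for all r∈[0,1) (resp. u(r)<0 for all r∈[0,1)), u'(r)≤0 on [0,1] (resp. u'(r)≥0 on [0,1]), and u'(1)<0 (resp. u'(1)>0). -/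
open Set MeasureTheory Filter Topology intervalIntegral

noncomputable section

namespace Stmt9Aux

lemma phi_zero (p : ℝ) : phi p 0 = 0 := by simp [phi]

lemma phi_pos_of_pos (p : ℝ) {ξ : ℝ} (h : 0 < ξ) : 0 < phi p ξ :=
  mul_pos (Real.rpow_pos_of_pos (abs_pos.2 h.ne') _) h

lemma nonpos_of_phi_nonpos {p ξ : ℝ} (h : phi p ξ ≤ 0) : ξ ≤ 0 := by
  by_contra hc
  exact absurd h (not_le.2 (phi_pos_of_pos p (lt_of_not_ge hc)))

lemma neg_of_phi_neg {p ξ : ℝ} (h : phi p ξ < 0) : ξ < 0 := by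
  rcases lt_or_eq_of_le (nonpos_of_phi_nonpos h.le) with h' | h'
  · exact h'
  · rw [h', phi_zero] at h; exact absurd h (lt_irrefl 0)

lemma phi_neg_arg (p ξ : ℝ) : phi p (-ξ) = -phi p ξ := by
  simp [phi, abs_neg, mul_comm]

lemma deriv01_neg (u : ℝ → ℝ) {r : ℝ} (hr : r ∈ Set.Icc (0:ℝ) 1) :
    deriv01 (fun x => -u x) r = -deriv01 u r :=
  derivWithin.neg

lemma C1on01_neg {u : ℝ → ℝ} (h : C1on01 u) : C1on01 (fun x => -u x) := by
  refine ⟨fun r hr => (h.1 r hr).neg, ?_⟩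
  exact (h.2.neg).congr (fun r hr => deriv01_neg u hr)

lemma pos_case (p : ℝ) (N : ℕ)
    (f : ℝ → ℝ → ℝ)
    (hf_sign : ∀ r ∈ Set.Icc (0:ℝ) 1, ∀ ξ : ℝ, ξ ≠ 0 → 0 < f r ξ * ξ)
    (hf_zero : ∀ r ∈ Set.Icc (0:ℝ) 1, f r 0 = 0)
    (lam : ℝ) (hlam : 0 < lam) (u : ℝ → ℝ)
    (hsol : IsSolutionP p N f lam u) (hnt : Nontriv01 u)
    (hpos : ∀ r ∈ Set.Icc (0:ℝ) 1, 0 ≤ u r) :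
    (∀ r ∈ Set.Ico (0:ℝ) 1, 0 < u r) ∧
    (∀ r ∈ Set.Icc (0:ℝ) 1, deriv01 u r ≤ 0) ∧
    deriv01 u 1 < 0 := by
  obtain ⟨hC1u, hC1phi, hODE, hu'0, hu1⟩ := hsol
  set g : ℝ → ℝ := fun s => s ^ (N - 1) * phi p (deriv01 u s) with hg
  have hgcont : ContinuousOn g (Icc 0 1) :=
    (continuous_pow (N - 1)).continuousOn.mul
      (fun r hr => (hC1phi.1 r hr).continuousWithinAt)
  have hg0 : g 0 = 0 := by simp [hg, hu'0, phi_zero]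
  have hfpos : ∀ r ∈ Icc (0:ℝ) 1, 0 < u r → 0 < f r (u r) := by
    intro r hr hur
    have h := hf_sign r hr (u r) hur.ne'
    nlinarith
  have hfnn : ∀ r ∈ Icc (0:ℝ) 1, 0 ≤ f r (u r) := by
    intro r hr
    rcases eq_or_lt_of_le (hpos r hr) with h | h
    · rw [← h, hf_zero r hr]
    · exact (hfpos r hr h).le
  have hganti : AntitoneOn g (Icc 0 1) := by
    apply antitoneOn_of_deriv_nonpos (convex_Icc 0 1) hgcont
    · rw [interior_Icc]
      exact fun r hr => (hODE r hr).differentiableAt.differentiableWithinAt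
    · rw [interior_Icc]
      intro r hr
      rw [(hODE r hr).deriv]
      have h1 : (0:ℝ) ≤ r ^ (N - 1) := pow_nonneg hr.1.le _
      have h2 := hfnn r ⟨hr.1.le, hr.2.le⟩
      exact neg_nonpos.2 (mul_nonneg (mul_nonneg hlam.le h1) h2)
  have hgle : ∀ r ∈ Icc (0:ℝ) 1, g r ≤ 0 := by
    intro r hr
    have := hganti (left_mem_Icc.2 zero_le_one) hr hr.1
    rwa [hg0] at this
  have hu'le : ∀ r ∈ Icc (0:ℝ) 1, deriv01 u r ≤ 0 := by
    intro r hr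
    rcases eq_or_lt_of_le hr.1 with h | h
    · rw [← h, hu'0]
    · have hgl := hgle r hr
      have hpow : (0:ℝ) < r ^ (N - 1) := pow_pos h _
      have hphi : phi p (deriv01 u r) ≤ 0 := by
        by_contra hc
        exact absurd hgl (not_le.2 (mul_pos hpow (lt_of_not_ge hc)))
      exact nonpos_of_phi_nonpos hphi
  have hucont : ContinuousOn u (Icc 0 1) :=
    fun r hr => (hC1u.1 r hr).continuousWithinAt
  have huanti : AntitoneOn u (Icc 0 1) := by
    apply antitoneOn_of_deriv_nonpos (convex_Icc 0 1) hucont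
    · rw [interior_Icc]
      intro r hr
      exact ((hC1u.1 r ⟨hr.1.le, hr.2.le⟩).differentiableAt
        (Icc_mem_nhds hr.1 hr.2)).differentiableWithinAt
    · rw [interior_Icc]
      intro r hr
      have hmem : Icc (0:ℝ) 1 ∈ 𝓝 r := Icc_mem_nhds hr.1 hr.2
      rw [← derivWithin_of_mem_nhds hmem]
      exact hu'le r ⟨hr.1.le, hr.2.le⟩
  obtain ⟨r₀, hr₀, hr₀ne⟩ := hnt
  have hur₀ : 0 < u r₀ := (hpos r₀ hr₀).lt_of_ne (Ne.symm hr₀ne)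
  set Z : Set ℝ := {r | r ∈ Icc (0:ℝ) 1 ∧ u r = 0} with hZ
  have hZne : Z.Nonempty := ⟨1, right_mem_Icc.2 zero_le_one, hu1⟩
  have hZbdd : BddBelow Z := ⟨0, fun z hz => hz.1.1⟩
  have hZclosed : IsClosed Z := by
    have : Z = Icc (0:ℝ) 1 ∩ u ⁻¹' {0} := by
      ext z; exact Iff.rfl
    rw [this]
    exact hucont.preimage_isClosed_of_isClosed isClosed_Icc isClosed_singleton
  set r₁ : ℝ := sInf Z with hr₁
  have hr₁Z : r₁ ∈ Z := hZclosed.csInf_mem hZne hZbdd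
  have hr₀lt : ∀ z ∈ Z, r₀ < z := by
    intro z hz
    by_contra h
    have : u r₀ ≤ u z := huanti hz.1 hr₀ (le_of_not_gt h)
    rw [hz.2] at this
    linarith
  have hr₁pos : 0 < r₁ := lt_of_le_of_lt hr₀.1 (hr₀lt r₁ hr₁Z)
  have hr₁le1 : r₁ ≤ 1 := csInf_le hZbdd ⟨right_mem_Icc.2 zero_le_one, hu1⟩
  have hupos' : ∀ r, 0 ≤ r → r < r₁ → 0 < u r := by
    intro r h0 hlt
    have hrIcc : r ∈ Icc (0:ℝ) 1 := ⟨h0, hlt.le.trans hr₁le1⟩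
    rcases eq_or_lt_of_le (hpos r hrIcc) with h | h
    · exfalso
      have : r ∈ Z := ⟨hrIcc, h.symm⟩
      exact absurd (csInf_le hZbdd this) (not_le.2 hlt)
    · exact h
  have hr₁1 : r₁ = 1 := by
    by_contra hne
    have hr₁lt1 : r₁ < 1 := lt_of_le_of_ne hr₁le1 hne
    have hmem : Icc (0:ℝ) 1 ∈ 𝓝 r₁ := Icc_mem_nhds hr₁pos hr₁lt1
    have hlocmin : IsLocalMin u r₁ := by
      filter_upwards [hmem] with x hx
      rw [hr₁Z.2]; exact hpos x hx
    have hderiv : HasDerivAt u (deriv01 u r₁) r₁ := by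
      have hd := (hC1u.1 r₁ ⟨hr₁pos.le, hr₁le1⟩).differentiableAt hmem
      rw [deriv01, derivWithin_of_mem_nhds hmem]
      exact hd.hasDerivAt
    have hu'r₁ : deriv01 u r₁ = 0 := hlocmin.hasDerivAt_eq_zero hderiv
    have hgr₁ : g r₁ = 0 := by simp [hg, hu'r₁, phi_zero]
    have hstrict : StrictAntiOn g (Icc 0 r₁) := by
      apply strictAntiOn_of_deriv_neg (convex_Icc 0 r₁)
        (hgcont.mono (Icc_subset_Icc le_rfl hr₁le1))
      rw [interior_Icc]
      intro r hr
      have hrIoo : r ∈ Ioo (0:ℝ) 1 := ⟨hr.1, hr.2.trans hr₁lt1⟩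
      rw [(hODE r hrIoo).deriv]
      have hfp : 0 < f r (u r) :=
        hfpos r ⟨hr.1.le, hrIoo.2.le⟩ (hupos' r hr.1.le hr.2)
      have hpw : (0:ℝ) < r ^ (N - 1) := pow_pos hr.1 _
      exact neg_lt_zero.2 (mul_pos (mul_pos hlam hpw) hfp)
    have := hstrict (left_mem_Icc.2 hr₁pos.le) (right_mem_Icc.2 hr₁pos.le) hr₁pos
    rw [hg0, hgr₁] at this
    exact absurd this (lt_irrefl 0)
  refine ⟨fun r hr => hupos' r hr.1 (hr₁1 ▸ hr.2), hu'le, ?_⟩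
  have hstrict1 : StrictAntiOn g (Icc 0 1) := by
    apply strictAntiOn_of_deriv_neg (convex_Icc 0 1) hgcont
    rw [interior_Icc]
    intro r hr
    rw [(hODE r hr).deriv]
    have hfp : 0 < f r (u r) :=
      hfpos r ⟨hr.1.le, hr.2.le⟩ (hupos' r hr.1.le (hr₁1 ▸ hr.2))
    have hpw : (0:ℝ) < r ^ (N - 1) := pow_pos hr.1 _
    exact neg_lt_zero.2 (mul_pos (mul_pos hlam hpw) hfp)
  have h1 := hstrict1 (left_mem_Icc.2 zero_le_one) (right_mem_Icc.2 zero_le_one) one_pos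
  rw [hg0] at h1
  have hphi1 : phi p (deriv01 u 1) < 0 := by
    have hgeq : g 1 = phi p (deriv01 u 1) := by simp [hg]
    linarith [hgeq ▸ h1]
  exact neg_of_phi_neg hphi1

lemma neg_transform (p : ℝ) (N : ℕ) (f : ℝ → ℝ → ℝ) (lam : ℝ) (u : ℝ → ℝ)
    (hsol : IsSolutionP p N f lam u) :
    IsSolutionP p N (fun r ξ => -f r (-ξ)) lam (fun x => -u x) := by
  obtain ⟨hC1u, hC1phi, hODE, hu'0, hu1⟩ := hsol
  have heq : Set.EqOn (fun r => phi p (deriv01 (fun x => -u x) r))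
      (fun r => -(phi p (deriv01 u r))) (Set.Icc 0 1) := by
    intro r hr
    simp only []
    rw [deriv01_neg u hr, phi_neg_arg]
  refine ⟨C1on01_neg hC1u, ⟨?_, ?_⟩, ?_, ?_, ?_⟩
  · intro r hr
    exact ((hC1phi.1 r hr).neg).congr (fun x hx => heq hx) (heq hr)
  · apply (hC1phi.2.neg).congr
    intro r hr
    have h1 : deriv01 (fun r => phi p (deriv01 (fun x => -u x) r)) r
        = derivWithin (fun r => -(phi p (deriv01 u r))) (Set.Icc 0 1) r :=
      derivWithin_congr heq (heq hr)
    rw [h1, derivWithin.fun_neg]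
    rfl
  · intro r hr
    have hmem : Set.Icc (0:ℝ) 1 ∈ 𝓝 r := Icc_mem_nhds hr.1 hr.2
    have hev : (fun s => s ^ (N - 1) * phi p (deriv01 (fun x => -u x) s)) =ᶠ[𝓝 r]
        (fun s => -(s ^ (N - 1) * phi p (deriv01 u s))) := by
      filter_upwards [hmem] with x hx
      rw [deriv01_neg u hx, phi_neg_arg]
      ring
    have hD := (hODE r hr).neg
    have := hD.congr_of_eventuallyEq hev
    refine this.congr_deriv ?_
    simp
  · rw [deriv01_neg u (Set.left_mem_Icc.2 zero_le_one), hu'0, neg_zero]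
  · simp [hu1]

end Stmt9Aux

/-- for `f(r,ξ)ξ > 0` off `ξ = 0`, sign-definite nontrivial solutions are
strictly positive (resp. negative) on `[0,1)`, monotone, with `u'(1) < 0`
(resp. `u'(1) > 0`). -/
theorem stmt_9 (p : ℝ) (hp : 1 < p) (N : ℕ) (hN : 1 ≤ N)
    (f : ℝ → ℝ → ℝ)
    (hf_cont : ContinuousOn (fun q : ℝ × ℝ => f q.1 q.2) (Set.Icc 0 1 ×ˢ Set.univ))
    (hf_sign : ∀ r ∈ Set.Icc (0:ℝ) 1, ∀ ξ : ℝ, ξ ≠ 0 → 0 < f r ξ * ξ)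
    (hf_zero : ∀ r ∈ Set.Icc (0:ℝ) 1, f r 0 = 0)
    (lam : ℝ) (hlam : 0 < lam) (u : ℝ → ℝ)
    (hsol : IsSolutionP p N f lam u) (hnt : Nontriv01 u) :
    ((∀ r ∈ Set.Icc (0:ℝ) 1, 0 ≤ u r) →
      (∀ r ∈ Set.Ico (0:ℝ) 1, 0 < u r) ∧
      (∀ r ∈ Set.Icc (0:ℝ) 1, deriv01 u r ≤ 0) ∧
      deriv01 u 1 < 0) ∧
    ((∀ r ∈ Set.Icc (0:ℝ) 1, u r ≤ 0) →
      (∀ r ∈ Set.Ico (0:ℝ) 1, u r < 0) ∧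
      (∀ r ∈ Set.Icc (0:ℝ) 1, 0 ≤ deriv01 u r) ∧
      0 < deriv01 u 1) := by
  constructor
  · intro hpos
    exact Stmt9Aux.pos_case p N f hf_sign hf_zero lam hlam u hsol hnt hpos
  · intro hneg
    set F : ℝ → ℝ → ℝ := fun r ξ => -f r (-ξ) with hF
    set v : ℝ → ℝ := fun x => -u x with hv
    have hF_sign : ∀ r ∈ Set.Icc (0:ℝ) 1, ∀ ξ : ℝ, ξ ≠ 0 → 0 < F r ξ * ξ := by
      intro r hr ξ hξ
      have := hf_sign r hr (-ξ) (neg_ne_zero.2 hξ)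
      simp only [hF]
      nlinarith
    have hF_zero : ∀ r ∈ Set.Icc (0:ℝ) 1, F r 0 = 0 := by
      intro r hr
      simp [hF, hf_zero r hr]
    have hsolv : IsSolutionP p N F lam v := Stmt9Aux.neg_transform p N f lam u hsol
    have hntv : Nontriv01 v := by
      obtain ⟨r₀, hr₀, hne⟩ := hnt
      exact ⟨r₀, hr₀, by simp [hv, hne]⟩
    have hposv : ∀ r ∈ Set.Icc (0:ℝ) 1, 0 ≤ v r := by
      intro r hr
      simp only [hv]
      linarith [hneg r hr]
    obtain ⟨h1, h2, h3⟩ :=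
      Stmt9Aux.pos_case p N F hF_sign hF_zero lam hlam v hsolv hntv hposv
    refine ⟨?_, ?_, ?_⟩
    · intro r hr
      have := h1 r hr
      simp only [hv] at this
      linarith
    · intro r hr
      have := h2 r hr
      rw [hv, Stmt9Aux.deriv01_neg u hr] at this
      linarith
    · have := h3
      rw [hv, Stmt9Aux.deriv01_neg u (Set.right_mem_Icc.2 zero_le_one)] at this
      linarith
end
end

section
/- Assume hypotheses (H). Let (λ,u) be a nontrivial solution of (P) with λ>0. Suppose v∈C([0,1],ℝ) is differentiable on (0,1], v(1)=0, v'(r)→0 as r→0⁺, and the function r↦r^{N−1}|u'(r)|^{p−2}v'(r) extends to a C^1 function w on [0,1] satisfying −w'(r) = p* λ r^{N−1} ∂_2f(r,u(r)) v(r) for 0<r<1. Then v≡0 on [0,1]. -/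
open Set MeasureTheory Filter Topology intervalIntegral

noncomputable section

/-- Hypotheses (H) of the paper: (H1)–(H6), with `f₂ = ∂₂f` and asymptotes `f0`, `finf`. -/
structure HypH (p : ℝ) (N : ℕ) (f f₂ : ℝ → ℝ → ℝ) (f0 finf : ℝ → ℝ) : Prop where
  hp : 2 < p
  hN : 1 ≤ N
  hf_cont : ContinuousOn (fun q : ℝ × ℝ => f q.1 q.2) (Set.Icc 0 1 ×ˢ Set.univ)
  hf_deriv : ∀ r ∈ Set.Icc (0:ℝ) 1, ∀ ξ : ℝ, HasDerivAt (fun t => f r t) (f₂ r ξ) ξ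
  hf₂_cont : ContinuousOn (fun q : ℝ × ℝ => f₂ q.1 q.2) (Set.Icc 0 1 ×ˢ Set.univ)
  hH2 : ∀ r ∈ Set.Icc (0:ℝ) 1, ∀ ξ : ℝ, ξ ≠ 0 → 0 < f r ξ
  hf_zero : ∀ r ∈ Set.Icc (0:ℝ) 1, f r 0 = 0
  hH3 : ∀ r ∈ Set.Icc (0:ℝ) 1, ∀ ξ : ℝ, 0 ≤ ξ → f₂ r ξ * ξ ≤ (p - 1) * f r ξ
  hH3s : ∃ δ > 0, ∃ ε > 0, ∀ r ∈ Set.Ioc (1 - δ) 1, ∀ ξ ∈ Set.Ioo (0:ℝ) ε,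
      f₂ r ξ * ξ < (p - 1) * f r ξ
  hf0_cont : ContinuousOn f0 (Set.Icc 0 1)
  hfinf_cont : ContinuousOn finf (Set.Icc 0 1)
  hH4a : ∀ e > 0, ∃ d > 0, ∀ ξ ∈ Set.Ioo (0:ℝ) d, ∀ r ∈ Set.Icc (0:ℝ) 1,
      |f r ξ / phi p ξ - f0 r| < e
  hH4b : ∀ e > 0, ∃ d > 0, ∀ ξ ∈ Set.Ioo (0:ℝ) d, ∀ r ∈ Set.Icc (0:ℝ) 1,
      |f₂ r ξ / ξ ^ (p - 2) - (p - 1) * f0 r| < e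
  hH5 : ∀ e > 0, ∃ M : ℝ, ∀ ξ : ℝ, M ≤ ξ → ∀ r ∈ Set.Icc (0:ℝ) 1,
      |f r ξ / phi p ξ - finf r| < e
  hH6 : (∀ r ∈ Set.Icc (0:ℝ) 1, 0 < finf r) ∨ (N = 1 ∧ ∀ r ∈ Set.Icc (0:ℝ) 1, finf r = 0)


/-- Auxiliary: `φ_p` of a positive number is positive. -/
lemma phi_pos_of_pos {p ξ : ℝ} (h : 0 < ξ) : 0 < phi p ξ :=
  mul_pos (Real.rpow_pos_of_pos (abs_pos.2 h.ne') _) h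

lemma nonpos_of_phi_nonpos {p ξ : ℝ} (h : phi p ξ ≤ 0) : ξ ≤ 0 := by
  by_contra hc; push_neg at hc; exact absurd h (not_le.2 (phi_pos_of_pos hc))

lemma neg_of_phi_neg {p ξ : ℝ} (h : phi p ξ < 0) : ξ < 0 := by
  rcases lt_or_eq_of_le (nonpos_of_phi_nonpos h.le) with h' | h'
  · exact h'
  · subst h'; simp [phi] at h

/-- At interior points, a function differentiable within `[0,1]` has `deriv01` as a
true derivative. -/
lemma hasDerivAt01 {f : ℝ → ℝ} {r : ℝ} (hr : r ∈ Set.Ioo (0:ℝ) 1)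
    (h : DifferentiableWithinAt ℝ f (Set.Icc 0 1) r) : HasDerivAt f (deriv01 f r) r := by
  have hm : Set.Icc (0:ℝ) 1 ∈ 𝓝 r := Icc_mem_nhds hr.1 hr.2
  rw [deriv01, derivWithin_of_mem_nhds hm]
  exact (h.differentiableAt hm).hasDerivAt

/-- non-degeneracy of the linearization along a nontrivial solution
under (H): any solution `v` of the linearized problem vanishes identically. -/
theorem stmt_14 (p : ℝ) (N : ℕ) (f f₂ : ℝ → ℝ → ℝ) (f0 finf : ℝ → ℝ)
    (H : HypH p N f f₂ f0 finf)
    (lam : ℝ) (hlam : 0 < lam) (u : ℝ → ℝ)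
    (hsol : IsSolutionP p N f lam u) (hnt : Nontriv01 u)
    (v : ℝ → ℝ)
    (hv_cont : ContinuousOn v (Set.Icc 0 1))
    (hv_diff : ∀ r ∈ Set.Ioc (0:ℝ) 1, DifferentiableWithinAt ℝ v (Set.Icc 0 1) r)
    (hv1 : v 1 = 0)
    (hv0 : Filter.Tendsto (fun r => deriv01 v r) (nhdsWithin 0 (Set.Ioi 0)) (nhds 0))
    (w : ℝ → ℝ) (hw : C1on01 w)
    (hw_agree : ∀ r ∈ Set.Ioc (0:ℝ) 1,
      w r = r ^ (N - 1) * |deriv01 u r| ^ (p - 2) * deriv01 v r)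
    (hw_eq : ∀ r ∈ Set.Ioo (0:ℝ) 1,
      HasDerivAt w (-((1 / (p - 1)) * lam * r ^ (N - 1) * f₂ r (u r) * v r)) r) :
    ∀ r ∈ Set.Icc (0:ℝ) 1, v r = 0 := by
  obtain ⟨hu_c1, hA_c1, hu_ode, hu'0, hu1⟩ := hsol
  have hpm1 : (0:ℝ) < p - 1 := by linarith [H.hp]
  set A : ℝ → ℝ := fun s => s ^ (N - 1) * phi p (deriv01 u s) with hA_def
  -- basic continuity facts
  have hu_cont : ContinuousOn u (Set.Icc 0 1) := fun r hr => (hu_c1.1 r hr).continuousWithinAt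
  have hu'_cont : ContinuousOn (deriv01 u) (Set.Icc 0 1) := hu_c1.2
  have hphi_cont : ContinuousOn (fun r => phi p (deriv01 u r)) (Set.Icc 0 1) :=
    fun r hr => (hA_c1.1 r hr).continuousWithinAt
  have hA_cont : ContinuousOn A (Set.Icc 0 1) :=
    ((continuous_pow (N - 1)).continuousOn).mul hphi_cont
  have hw_cont : ContinuousOn w (Set.Icc 0 1) := fun r hr => (hw.1 r hr).continuousWithinAt
  -- f is nonnegative
  have hf_nonneg : ∀ r ∈ Set.Icc (0:ℝ) 1, ∀ ξ : ℝ, 0 ≤ f r ξ := by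
    intro r hr ξ
    rcases eq_or_ne ξ 0 with h | h
    · rw [h, H.hf_zero r hr]
    · exact (H.hH2 r hr ξ h).le
  have hA0 : A 0 = 0 := by simp [hA_def, hu'0, phi]
  -- A is antitone
  have hA_anti : AntitoneOn A (Set.Icc 0 1) := by
    apply antitoneOn_of_deriv_nonpos (convex_Icc 0 1) hA_cont
    · intro x hx
      rw [interior_Icc] at hx
      exact (hu_ode x hx).differentiableAt.differentiableWithinAt
    · intro x hx
      rw [interior_Icc] at hx
      rw [(hu_ode x hx).deriv]
      have h1 := hf_nonneg x (Ioo_subset_Icc_self hx) (u x)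
      have h2 : 0 ≤ lam * x ^ (N - 1) * f x (u x) :=
        mul_nonneg (mul_nonneg hlam.le (pow_nonneg hx.1.le _)) h1
      linarith
  have hA_le : ∀ r ∈ Set.Icc (0:ℝ) 1, A r ≤ 0 := by
    intro r hr
    have := hA_anti (left_mem_Icc.2 zero_le_one) hr hr.1
    rwa [hA0] at this
  have hu'_nonpos : ∀ r ∈ Set.Icc (0:ℝ) 1, deriv01 u r ≤ 0 := by
    intro r hr
    rcases eq_or_lt_of_le hr.1 with h0 | h0
    · rw [← h0, hu'0]
    · have h1 : r ^ (N - 1) * phi p (deriv01 u r) ≤ 0 := by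
        have h := hA_le r hr; simpa [hA_def] using h
      have hrp : 0 < r ^ (N - 1) := pow_pos h0 _
      have h2 : phi p (deriv01 u r) ≤ 0 := by
        by_contra hc; push_neg at hc
        nlinarith [mul_pos hrp hc]
      exact nonpos_of_phi_nonpos h2
  -- u is antitone
  have hu_anti : AntitoneOn u (Set.Icc 0 1) := by
    apply antitoneOn_of_deriv_nonpos (convex_Icc 0 1) hu_cont
    · intro x hx
      rw [interior_Icc] at hx
      exact ((hu_c1.1 x (Ioo_subset_Icc_self hx)).differentiableAt
        (Icc_mem_nhds hx.1 hx.2)).differentiableWithinAt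
    · intro x hx
      rw [interior_Icc] at hx
      rw [← derivWithin_of_mem_nhds (Icc_mem_nhds hx.1 hx.2)]
      exact hu'_nonpos x (Ioo_subset_Icc_self hx)
  -- u 0 > 0
  have hu0pos : 0 < u 0 := by
    obtain ⟨rb, hrb, hrbne⟩ := hnt
    have h1 : u 1 ≤ u rb := hu_anti hrb (right_mem_Icc.2 zero_le_one) hrb.2
    rw [hu1] at h1
    have h2 : 0 < u rb := lt_of_le_of_ne h1 (Ne.symm hrbne)
    have h3 : u rb ≤ u 0 := hu_anti (left_mem_Icc.2 zero_le_one) hrb hrb.1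
    linarith
  -- an interior point where u is positive
  obtain ⟨t0, ht0a, ht0b, ht0u⟩ : ∃ t : ℝ, 0 < t ∧ t < 1 ∧ 0 < u t := by
    have hne : (𝓝[Set.Ioc (0:ℝ) 1] (0:ℝ)).NeBot := by
      rw [← mem_closure_iff_nhdsWithin_neBot, closure_Ioc (zero_ne_one (α := ℝ))]
      exact left_mem_Icc.2 zero_le_one
    have hco : Tendsto u (𝓝[Set.Ioc (0:ℝ) 1] 0) (𝓝 (u 0)) :=
      ((hu_cont 0 (left_mem_Icc.2 zero_le_one)).mono_left (nhdsWithin_mono _ Ioc_subset_Icc_self))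
    have h1 : ∀ᶠ t in 𝓝[Set.Ioc (0:ℝ) 1] (0:ℝ), 0 < u t := hco (Ioi_mem_nhds hu0pos)
    have h2 : ∀ᶠ t in 𝓝[Set.Ioc (0:ℝ) 1] (0:ℝ), t < 1 :=
      mem_nhdsWithin_of_mem_nhds (Iio_mem_nhds one_pos)
    obtain ⟨t, ⟨htu, htlt⟩, htmem⟩ := ((h1.and h2).and self_mem_nhdsWithin).exists
    exact ⟨t, htmem.1, htlt, htu⟩
  have hu_pos_t0 : ∀ r ∈ Set.Icc (0:ℝ) t0, 0 < u r := by
    intro r hr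
    have h1 : u t0 ≤ u r := hu_anti ⟨hr.1, le_trans hr.2 ht0b.le⟩ ⟨ht0a.le, ht0b.le⟩ hr.2
    linarith
  -- A is strictly negative on (0,1]
  have hA_neg : ∀ r ∈ Set.Ioc (0:ℝ) 1, A r < 0 := by
    intro r hr
    have hstrict : StrictAntiOn A (Set.Icc 0 t0) := by
      apply strictAntiOn_of_deriv_neg (convex_Icc 0 t0)
        (hA_cont.mono (Icc_subset_Icc le_rfl ht0b.le))
      intro x hx
      rw [interior_Icc] at hx
      have hx' : x ∈ Set.Ioo (0:ℝ) 1 := ⟨hx.1, lt_trans hx.2 ht0b⟩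
      rw [(hu_ode x hx').deriv]
      have hfx : 0 < f x (u x) :=
        H.hH2 x (Ioo_subset_Icc_self hx') (u x) (hu_pos_t0 x ⟨hx.1.le, hx.2.le⟩).ne'
      have : 0 < lam * x ^ (N - 1) * f x (u x) :=
        mul_pos (mul_pos hlam (pow_pos hx.1 _)) hfx
      linarith
    have hAt0 : A t0 < 0 := by
      have := hstrict (left_mem_Icc.2 ht0a.le) (right_mem_Icc.2 ht0a.le) ht0a
      rwa [hA0] at this
    rcases le_or_gt r t0 with h | h
    · have := hstrict (left_mem_Icc.2 ht0a.le) ⟨hr.1.le, h⟩ hr.1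
      rwa [hA0] at this
    · have := hA_anti ⟨ht0a.le, ht0b.le⟩ ⟨le_trans ht0a.le h.le, hr.2⟩ h.le
      linarith
  -- u' is strictly negative on (0,1]
  have hu'_neg : ∀ r ∈ Set.Ioc (0:ℝ) 1, deriv01 u r < 0 := by
    intro r hr
    have h1 : r ^ (N - 1) * phi p (deriv01 u r) < 0 := by
      have h := hA_neg r hr; simpa [hA_def] using h
    have hrp : 0 < r ^ (N - 1) := pow_pos hr.1 _
    have h2 : phi p (deriv01 u r) < 0 := by
      by_contra hc; push_neg at hc
      nlinarith [mul_nonneg hrp.le hc]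
    exact neg_of_phi_neg h2
  -- u is positive on [0,1)
  have hu_pos : ∀ r ∈ Set.Ico (0:ℝ) 1, 0 < u r := by
    intro r hr
    have hs : StrictAntiOn u (Set.Icc r 1) := by
      apply strictAntiOn_of_deriv_neg (convex_Icc r 1)
        (hu_cont.mono (Icc_subset_Icc hr.1 le_rfl))
      intro x hx
      rw [interior_Icc] at hx
      have hx' : x ∈ Set.Ioo (0:ℝ) 1 := ⟨lt_of_le_of_lt hr.1 hx.1, hx.2⟩
      rw [← derivWithin_of_mem_nhds (Icc_mem_nhds hx'.1 hx'.2)]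
      exact hu'_neg x ⟨hx'.1, hx'.2.le⟩
    have := hs (left_mem_Icc.2 hr.2.le) (right_mem_Icc.2 hr.2.le) hr.2
    rwa [hu1] at this
  -- w 0 = 0
  have hw0 : w 0 = 0 := by
    have hne : (𝓝[Set.Ioc (0:ℝ) 1] (0:ℝ)).NeBot := by
      rw [← mem_closure_iff_nhdsWithin_neBot, closure_Ioc (zero_ne_one (α := ℝ))]
      exact left_mem_Icc.2 zero_le_one
    have h1 : Tendsto w (𝓝[Set.Ioc (0:ℝ) 1] 0) (𝓝 (w 0)) :=
      (hw_cont 0 (left_mem_Icc.2 zero_le_one)).mono_left (nhdsWithin_mono _ Ioc_subset_Icc_self)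
    have ha : Tendsto (deriv01 u) (𝓝[Set.Ioc (0:ℝ) 1] 0) (𝓝 0) := by
      have h := (hu'_cont 0 (left_mem_Icc.2 zero_le_one)).mono_left
        (nhdsWithin_mono _ Ioc_subset_Icc_self)
      rwa [hu'0] at h
    have hb : Tendsto (fun r => |deriv01 u r| ^ (p - 2)) (𝓝[Set.Ioc (0:ℝ) 1] 0) (𝓝 0) := by
      have hc : ContinuousAt (fun x : ℝ => |x| ^ (p - 2)) 0 :=
        (Real.continuousAt_rpow_const _ _ (Or.inr (by linarith [H.hp]))).comp
          continuous_abs.continuousAt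
      have h := hc.tendsto.comp ha
      simpa [Function.comp_def, Real.zero_rpow (show p - 2 ≠ 0 by linarith [H.hp])] using h
    have hr1 : Tendsto (fun r : ℝ => r ^ (N - 1)) (𝓝[Set.Ioc (0:ℝ) 1] 0) (𝓝 ((0:ℝ) ^ (N - 1))) :=
      ((continuous_pow (N - 1)).tendsto 0).mono_left nhdsWithin_le_nhds
    have hv' : Tendsto (deriv01 v) (𝓝[Set.Ioc (0:ℝ) 1] 0) (𝓝 0) :=
      hv0.mono_left (nhdsWithin_mono _ Ioc_subset_Ioi_self)
    have h2 : Tendsto (fun r => r ^ (N - 1) * |deriv01 u r| ^ (p - 2) * deriv01 v r)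
        (𝓝[Set.Ioc (0:ℝ) 1] 0) (𝓝 0) := by
      have h := (hr1.mul hb).mul hv'
      simpa using h
    have h3 : Tendsto w (𝓝[Set.Ioc (0:ℝ) 1] 0) (𝓝 0) := by
      apply h2.congr'
      filter_upwards [self_mem_nhdsWithin] with r hr
      exact (hw_agree r hr).symm
    exact tendsto_nhds_unique h1 h3
  -- key lemma: if v is positive somewhere in [0,1), contradiction
  have key : ∀ V W : ℝ → ℝ, ContinuousOn V (Set.Icc 0 1) →
      (∀ r ∈ Set.Ioc (0:ℝ) 1, DifferentiableWithinAt ℝ V (Set.Icc 0 1) r) → V 1 = 0 →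
      ContinuousOn W (Set.Icc 0 1) → W 0 = 0 →
      (∀ r ∈ Set.Ioc (0:ℝ) 1, W r = r ^ (N - 1) * |deriv01 u r| ^ (p - 2) * deriv01 V r) →
      (∀ r ∈ Set.Ioo (0:ℝ) 1,
        HasDerivAt W (-((1 / (p - 1)) * lam * r ^ (N - 1) * f₂ r (u r) * V r)) r) →
      ∀ rs ∈ Set.Ico (0:ℝ) 1, 0 < V rs → False := by
    intro V W hVc hVd hV1 hWc hW0 hWag hWeq rs hrs hVrs
    -- the first zero of V to the right of rs
    set Z := {r ∈ Set.Icc rs 1 | V r = 0} with hZ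
    have hZclosed : IsClosed Z :=
      (hVc.mono (Icc_subset_Icc hrs.1 le_rfl)).preimage_isClosed_of_isClosed isClosed_Icc
        (isClosed_singleton (x := (0:ℝ)))
    have hZne : Z.Nonempty := ⟨1, ⟨⟨hrs.2.le, le_rfl⟩, hV1⟩⟩
    have hZbdd : BddBelow Z := ⟨0, fun x hx => le_trans hrs.1 hx.1.1⟩
    set b := sInf Z with hb_def
    have hbZ : b ∈ Z := hZclosed.csInf_mem hZne hZbdd
    have hVb : V b = 0 := hbZ.2
    have hb_mem : b ∈ Set.Icc rs 1 := hbZ.1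
    have hb1 : b ≤ 1 := hb_mem.2
    have hrsb : rs < b := by
      rcases eq_or_lt_of_le hb_mem.1 with h | h
      · rw [← h] at hVb; rw [hVb] at hVrs; exact absurd hVrs (lt_irrefl 0)
      · exact h
    have hVposR : ∀ r, rs ≤ r → r < b → 0 < V r := by
      intro r h1 h2
      by_contra hle; push_neg at hle
      have hrI1 : r ≤ 1 := le_trans h2.le hb1
      obtain ⟨z, hz, hVz⟩ := intermediate_value_Icc' h1
        (hVc.mono (Icc_subset_Icc hrs.1 hrI1)) (⟨hle, hVrs.le⟩ : (0:ℝ) ∈ Set.Icc (V r) (V rs))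
      have hzZ : z ∈ Z := ⟨⟨hz.1, le_trans hz.2 hrI1⟩, hVz⟩
      have := csInf_le hZbdd hzZ
      rw [← hb_def] at this
      linarith [hz.2]
    -- the last zero of V (or 0) to the left of rs
    set Zl := insert (0:ℝ) {r ∈ Set.Icc (0:ℝ) rs | V r = 0} with hZl
    have hZlclosed : IsClosed Zl := by
      rw [hZl, Set.insert_eq]
      exact isClosed_singleton.union
        ((hVc.mono (Icc_subset_Icc le_rfl hrs.2.le)).preimage_isClosed_of_isClosed isClosed_Icc
          (isClosed_singleton (x := (0:ℝ))))
    have h0Zl : (0:ℝ) ∈ Zl := Set.mem_insert _ _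
    have hZlbdd : BddAbove Zl := by
      refine ⟨rs, fun x hx => ?_⟩
      rcases hx with h | h
      · rw [h]; exact hrs.1
      · exact h.1.2
    set a := sSup Zl with ha_def
    have haZl : a ∈ Zl := hZlclosed.csSup_mem ⟨0, h0Zl⟩ hZlbdd
    have ha0 : 0 ≤ a := le_csSup hZlbdd h0Zl
    have hars : a ≤ rs := csSup_le ⟨0, h0Zl⟩ (fun x hx => by
      rcases hx with h | h
      · rw [h]; exact hrs.1
      · exact h.1.2)
    have hab : a < b := lt_of_le_of_lt hars hrsb
    have ha1 : a < 1 := lt_of_le_of_lt hars hrs.2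
    have hVposL : ∀ r, a < r → r ≤ rs → 0 < V r := by
      intro r h1 h2
      by_contra hle; push_neg at hle
      have hr0 : 0 ≤ r := le_trans ha0 h1.le
      obtain ⟨z, hz, hVz⟩ := intermediate_value_Icc h2
        (hVc.mono (Icc_subset_Icc hr0 hrs.2.le)) (⟨hle, hVrs.le⟩ : (0:ℝ) ∈ Set.Icc (V r) (V rs))
      have hzZl : z ∈ Zl := Set.mem_insert_of_mem _ ⟨⟨le_trans hr0 hz.1, hz.2⟩, hVz⟩
      have := le_csSup hZlbdd hzZl
      rw [← ha_def] at this
      linarith [hz.1]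
    have hVpos : ∀ r ∈ Set.Ioo a b, 0 < V r := by
      intro r hr
      rcases le_or_gt r rs with h | h
      · exact hVposL r hr.1 h
      · exact hVposR r h.le hr.2
    have haIoo : ∀ r ∈ Set.Ioo a b, r ∈ Set.Ioo (0:ℝ) 1 :=
      fun r hr => ⟨lt_of_le_of_lt ha0 hr.1, lt_of_lt_of_le hr.2 hb1⟩
    -- the Wronskian-type function
    set Wf : ℝ → ℝ := fun r => u r * W r - V r * A r with hWf
    have hWf_cont : ContinuousOn Wf (Set.Icc 0 1) := (hu_cont.mul hWc).sub (hVc.mul hA_cont)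
    have hWf_deriv : ∀ r ∈ Set.Ioo a b,
        HasDerivAt Wf (lam * r ^ (N - 1) * V r * (f r (u r) - u r * f₂ r (u r) / (p - 1))) r := by
      intro r hr
      have hr' := haIoo r hr
      have hu' : HasDerivAt u (deriv01 u r) r := hasDerivAt01 hr' (hu_c1.1 r (Ioo_subset_Icc_self hr'))
      have hv' : HasDerivAt V (deriv01 V r) r := hasDerivAt01 hr' (hVd r ⟨hr'.1, hr'.2.le⟩)
      have hw' := hWeq r hr'
      have hA' : HasDerivAt A (-(lam * r ^ (N - 1) * f r (u r))) r := hu_ode r hr'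
      have hcomb := (hu'.mul hw').sub (hv'.mul hA')
      have hwr : W r = r ^ (N - 1) * |deriv01 u r| ^ (p - 2) * deriv01 V r :=
        hWag r ⟨hr'.1, hr'.2.le⟩
      refine hcomb.congr_deriv ?_
      rw [hwr]
      simp only [hA_def, phi]
      field_simp
      ring
    have hWderiv_nonneg : ∀ r ∈ Set.Ioo a b, 0 ≤ deriv Wf r := by
      intro r hr
      rw [(hWf_deriv r hr).deriv]
      have hr' := haIoo r hr
      have h3 := H.hH3 r (Ioo_subset_Icc_self hr') (u r) (hu_pos r ⟨hr'.1.le, hr'.2⟩).le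
      have hfpart : 0 ≤ f r (u r) - u r * f₂ r (u r) / (p - 1) := by
        rw [sub_nonneg, div_le_iff₀ hpm1]
        nlinarith [h3]
      exact mul_nonneg (mul_nonneg (mul_nonneg hlam.le (pow_pos hr'.1 _).le)
        (hVpos r hr).le) hfpart
    have hWf_mono : MonotoneOn Wf (Set.Icc a b) := by
      apply monotoneOn_of_deriv_nonneg (convex_Icc a b)
        (hWf_cont.mono (Icc_subset_Icc ha0 hb1))
      · intro x hx
        rw [interior_Icc] at hx
        exact (hWf_deriv x hx).differentiableAt.differentiableWithinAt
      · intro x hx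
        rw [interior_Icc] at hx
        exact hWderiv_nonneg x hx
    -- Wf a ≥ 0
    have hWfa : 0 ≤ Wf a := by
      rcases eq_or_lt_of_le ha0 with h0 | h0
      · rw [← h0]
        simp [hWf, hW0, hA0]
      · have hVa : V a = 0 := by
          rcases haZl with h | h
          · exact absurd h h0.ne'
          · exact h.2
        have haI : a ∈ Set.Ioo (0:ℝ) 1 := ⟨h0, ha1⟩
        have hVa' : HasDerivAt V (deriv01 V a) a := hasDerivAt01 haI (hVd a ⟨haI.1, haI.2.le⟩)
        have hne : (𝓝[Set.Ioo a b] a).NeBot := by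
          rw [← mem_closure_iff_nhdsWithin_neBot, closure_Ioo hab.ne]
          exact left_mem_Icc.2 hab.le
        have hslope : 0 ≤ deriv01 V a := by
          have ht := (hasDerivAt_iff_tendsto_slope.1 hVa').mono_left
            (nhdsWithin_mono _ (fun x hx => ne_of_gt hx.1 : Set.Ioo a b ⊆ {a}ᶜ))
          refine ge_of_tendsto ht ?_
          filter_upwards [self_mem_nhdsWithin] with x hx
          have hsl : slope V a x = V x / (x - a) := by
            rw [slope_def_field]
            rw [hVa, sub_zero]
          rw [hsl]
          exact div_nonneg (hVpos x hx).le (by linarith [hx.1])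
        have hwa : W a = a ^ (N - 1) * |deriv01 u a| ^ (p - 2) * deriv01 V a :=
          hWag a ⟨h0, ha1.le⟩
        have hWfa' : Wf a = u a * W a := by simp [hWf, hVa]
        rw [hWfa', hwa]
        exact mul_nonneg (hu_pos a ⟨ha0, ha1⟩).le
          (mul_nonneg (mul_nonneg (pow_nonneg ha0 _) (Real.rpow_nonneg (abs_nonneg _) _)) hslope)
    -- case split on b = 1 or b < 1
    rcases eq_or_lt_of_le hb1 with hbeq | hblt
    · -- b = 1: use the strict inequality (H3s) near r = 1
      obtain ⟨δ, hδ, ε, hε, hH3s⟩ := H.hH3s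
      obtain ⟨t1, ht1mem, ht1u⟩ : ∃ t1, t1 ∈ Set.Ico (0:ℝ) 1 ∧ u t1 < ε := by
        have hne : (𝓝[Set.Ico (0:ℝ) 1] (1:ℝ)).NeBot := by
          rw [← mem_closure_iff_nhdsWithin_neBot, closure_Ico (zero_ne_one (α := ℝ))]
          exact right_mem_Icc.2 zero_le_one
        have hco : Tendsto u (𝓝[Set.Ico (0:ℝ) 1] 1) (𝓝 0) := by
          have h := (hu_cont 1 (right_mem_Icc.2 zero_le_one)).mono_left
            (nhdsWithin_mono _ Ico_subset_Icc_self)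
          rwa [hu1] at h
        have h1 : ∀ᶠ t in 𝓝[Set.Ico (0:ℝ) 1] (1:ℝ), u t < ε := hco (Iio_mem_nhds hε)
        obtain ⟨t, ht1, ht2⟩ := (h1.and self_mem_nhdsWithin).exists
        exact ⟨t, ht2, ht1⟩
      set c := max a (max (1 - δ) t1) with hc_def
      have hac : a ≤ c := le_max_left _ _
      have hc1 : c < 1 := max_lt ha1 (max_lt (by linarith) ht1mem.2)
      have hstr : StrictMonoOn Wf (Set.Icc c 1) := by
        apply strictMonoOn_of_deriv_pos (convex_Icc c 1)
          (hWf_cont.mono (Icc_subset_Icc (le_trans ha0 hac) le_rfl))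
        intro x hx
        rw [interior_Icc] at hx
        have hxa : x ∈ Set.Ioo a b := ⟨lt_of_le_of_lt hac hx.1, by rw [hbeq]; exact hx.2⟩
        rw [(hWf_deriv x hxa).deriv]
        have hx01 := haIoo x hxa
        have hux_pos : 0 < u x := hu_pos x ⟨hx01.1.le, hx01.2⟩
        have ht1x : t1 ≤ x := le_of_lt (lt_of_le_of_lt (le_trans (le_max_right _ _)
          (le_max_right a _)) hx.1)
        have hux_lt : u x < ε := by
          have h := hu_anti ⟨ht1mem.1, ht1mem.2.le⟩ (Ioo_subset_Icc_self hx01) ht1x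
          linarith
        have hδx : 1 - δ < x := lt_of_le_of_lt (le_trans (le_max_left _ _)
          (le_max_right a _)) hx.1
        have hstrict := hH3s x ⟨hδx, hx01.2.le⟩ (u x) ⟨hux_pos, hux_lt⟩
        have hfpart : 0 < f x (u x) - u x * f₂ x (u x) / (p - 1) := by
          rw [sub_pos, div_lt_iff₀ hpm1]
          nlinarith [hstrict]
        exact mul_pos (mul_pos (mul_pos hlam (pow_pos hx01.1 _)) (hVpos x hxa)) hfpart
      have h1 : Wf c < Wf 1 := hstr (left_mem_Icc.2 hc1.le) (right_mem_Icc.2 hc1.le) hc1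
      have h2 : Wf a ≤ Wf c := hWf_mono (left_mem_Icc.2 hab.le)
        ⟨hac, by rw [hbeq]; exact hc1.le⟩ hac
      have h3 : Wf 1 = 0 := by simp [hWf, hu1, hV1]
      linarith
    · -- b < 1: Wf vanishes on [a,b] and V/u is constant, contradiction
      have hbI : b ∈ Set.Ioo (0:ℝ) 1 := ⟨lt_of_le_of_lt ha0 hab, hblt⟩
      have hWfb : Wf b ≤ 0 := by
        have hVb' : HasDerivAt V (deriv01 V b) b := hasDerivAt01 hbI (hVd b ⟨hbI.1, hbI.2.le⟩)
        have hne : (𝓝[Set.Ioo a b] b).NeBot := by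
          rw [← mem_closure_iff_nhdsWithin_neBot, closure_Ioo hab.ne]
          exact right_mem_Icc.2 hab.le
        have hslope : deriv01 V b ≤ 0 := by
          have ht := (hasDerivAt_iff_tendsto_slope.1 hVb').mono_left
            (nhdsWithin_mono _ (fun x hx => ne_of_lt hx.2 : Set.Ioo a b ⊆ {b}ᶜ))
          refine le_of_tendsto ht ?_
          filter_upwards [self_mem_nhdsWithin] with x hx
          have hsl : slope V b x = V x / (x - b) := by
            rw [slope_def_field]
            rw [hVb, sub_zero]
          rw [hsl]
          exact div_nonpos_of_nonneg_of_nonpos (hVpos x hx).le (by linarith [hx.2])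
        have hwb : W b = b ^ (N - 1) * |deriv01 u b| ^ (p - 2) * deriv01 V b :=
          hWag b ⟨hbI.1, hbI.2.le⟩
        have hWfb' : Wf b = u b * W b := by simp [hWf, hVb]
        rw [hWfb', hwb]
        exact mul_nonpos_of_nonneg_of_nonpos (hu_pos b ⟨hbI.1.le, hbI.2⟩).le
          (mul_nonpos_of_nonneg_of_nonpos
            (mul_nonneg (pow_nonneg hbI.1.le _) (Real.rpow_nonneg (abs_nonneg _) _)) hslope)
      have huv : ∀ x ∈ Set.Ioo a b, u x * deriv01 V x = V x * deriv01 u x := by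
        intro x hx
        have hx01 := haIoo x hx
        have hWfx : Wf x = 0 := by
          have hle1 : Wf x ≤ Wf b := hWf_mono ⟨hx.1.le, hx.2.le⟩ (right_mem_Icc.2 hab.le) hx.2.le
          have hle2 : Wf a ≤ Wf x := hWf_mono (left_mem_Icc.2 hab.le) ⟨hx.1.le, hx.2.le⟩ hx.1.le
          linarith
        have hwx := hWag x ⟨hx01.1, hx01.2.le⟩
        have h1 : u x * W x = V x * A x := by
          simp only [hWf] at hWfx
          linarith
        rw [hwx] at h1
        simp only [hA_def, phi] at h1
        have hKpos : 0 < x ^ (N - 1) * |deriv01 u x| ^ (p - 2) :=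
          mul_pos (pow_pos hx01.1 _)
            (Real.rpow_pos_of_pos (abs_pos.2 (hu'_neg x ⟨hx01.1, hx01.2.le⟩).ne) _)
        have h2 : (x ^ (N - 1) * |deriv01 u x| ^ (p - 2)) * (u x * deriv01 V x)
            = (x ^ (N - 1) * |deriv01 u x| ^ (p - 2)) * (V x * deriv01 u x) := by
          linear_combination h1
        exact mul_left_cancel₀ (ne_of_gt hKpos) h2
      set q : ℝ → ℝ := fun x => V x / u x with hq
      set m := (a + b) / 2 with hm_def
      have hmI : m ∈ Set.Ioo a b := ⟨by simp only [hm_def]; linarith, by simp only [hm_def]; linarith⟩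
      have hm0 : 0 ≤ m := le_trans ha0 hmI.1.le
      have hsub : Set.Icc m b ⊆ Set.Icc (0:ℝ) 1 := Icc_subset_Icc hm0 hblt.le
      have hq_cont : ContinuousOn q (Set.Icc m b) := by
        apply ContinuousOn.div (hVc.mono hsub) (hu_cont.mono hsub)
        intro x hx
        exact (hu_pos x ⟨le_trans hm0 hx.1, lt_of_le_of_lt hx.2 hblt⟩).ne'
      have hq_deriv : ∀ x ∈ Set.Ioo m b, HasDerivAt q 0 x := by
        intro x hx
        have hx' : x ∈ Set.Ioo a b := ⟨lt_trans hmI.1 hx.1, hx.2⟩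
        have hx01 := haIoo x hx'
        have hu' : HasDerivAt u (deriv01 u x) x :=
          hasDerivAt01 hx01 (hu_c1.1 x (Ioo_subset_Icc_self hx01))
        have hv' : HasDerivAt V (deriv01 V x) x := hasDerivAt01 hx01 (hVd x ⟨hx01.1, hx01.2.le⟩)
        have hune : u x ≠ 0 := (hu_pos x ⟨hx01.1.le, hx01.2⟩).ne'
        have hdv := hv'.div hu' hune
        have hnum : deriv01 V x * u x - V x * deriv01 u x = 0 := by
          linear_combination huv x hx'
        rw [hnum, zero_div] at hdv
        exact hdv
      have hq_mono : MonotoneOn q (Set.Icc m b) := by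
        apply monotoneOn_of_deriv_nonneg (convex_Icc m b) hq_cont
        · intro x hx
          rw [interior_Icc] at hx
          exact (hq_deriv x hx).differentiableAt.differentiableWithinAt
        · intro x hx
          rw [interior_Icc] at hx
          rw [(hq_deriv x hx).deriv]
      have hq_anti : AntitoneOn q (Set.Icc m b) := by
        apply antitoneOn_of_deriv_nonpos (convex_Icc m b) hq_cont
        · intro x hx
          rw [interior_Icc] at hx
          exact (hq_deriv x hx).differentiableAt.differentiableWithinAt
        · intro x hx
          rw [interior_Icc] at hx
          rw [(hq_deriv x hx).deriv]
      have hmb : m ≤ b := hmI.2.le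
      have hqm : q m = q b :=
        le_antisymm (hq_mono (left_mem_Icc.2 hmb) (right_mem_Icc.2 hmb) hmb)
          (hq_anti (left_mem_Icc.2 hmb) (right_mem_Icc.2 hmb) hmb)
      have hqb : q b = 0 := by simp [hq, hVb]
      have hVm : 0 < V m := hVpos m hmI
      have hum : 0 < u m := hu_pos m ⟨hm0, lt_trans hmI.2 hblt⟩
      have : V m = 0 := by
        have h := hqm.trans hqb
        simp only [hq] at h
        exact (div_eq_zero_iff.1 h).resolve_right hum.ne'
      linarith
  -- conclude
  intro r hr
  by_contra hvr
  have hr1 : r < 1 := by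
    rcases eq_or_lt_of_le hr.2 with h | h
    · rw [h] at hvr; exact absurd hv1 hvr
    · exact h
  rcases lt_or_gt_of_ne hvr with hneg | hpos
  · refine key (fun t => -v t) (fun t => -w t) hv_cont.neg
      (fun s hs => (hv_diff s hs).neg) (by simp [hv1]) hw_cont.neg (by simp [hw0]) ?_ ?_
      r ⟨hr.1, hr1⟩ (by simpa using hneg)
    · intro s hs
      have hag := hw_agree s hs
      have hdn : deriv01 (fun t => -v t) s = -deriv01 v s := by
        simp only [deriv01]
        exact derivWithin.neg (f := v)
      show -(w s) = s ^ (N - 1) * |deriv01 u s| ^ (p - 2) * deriv01 (fun t => -v t) s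
      rw [hdn, hag]
      ring
    · intro s hs
      have h := (hw_eq s hs).neg
      refine h.congr_deriv ?_
      ring
  · exact key v w hv_cont hv_diff hv1 hw_cont hw0 hw_agree hw_eq r ⟨hr.1, hr1⟩ hpos
end
end
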